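/- arXiv:2503.07895 — 7 statements merged into one kernel-verified Lean document; each statement's English description precedes it below -/
import Mathlib

section
/- Let m ∈ ℕ and let f be holomorphic on an open neighborhood of 0 in ℂ, with Taylor expansion f(z) = Σ_{k≥0} a_k z^k at 0. The following are equivalent: (i) for every n ∈ ℕ, the function T^n f obtained by iterating the operator T : h ↦ (z ↦ h′(z)·z^{−m}) (each iterate defined and holomorphic on a punctured neighborhood of 0) extends holomorphically to 0; (ii) a_k = 0 for every k not divisible by m + 1; (iii) there exists a function g holomorphic on a neighborhood of 0 in ℂ such that f(z) = g(z^{m+1}/(m+1)) for all z in a neighborhood of 0. -/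
/-!
Write `T^[n] f = G_n · z^(-n(m+1))`. Differentiating gives `G_{n+1} = z G_n' - n(m+1) G_n`, and
since the Euler operator `z d/dz` multiplies the `k`-th Taylor coefficient by `k`, the `k`-th
coefficient of `G_n` is `a_k ∏_{j<n} (k - j(m+1))`. So `T^[n] f` has a removable singularity at
`0` iff these coefficients vanish for `k < n(m+1)`, and for `n = k + 1` the product vanishes
only when `(m+1) ∣ k`. The factorisation is read off the power series: `f(z) = g(z^(m+1))` with
`g(w) = Σ a_{(m+1)j} w^j`, which converges on a disc of radius `ρ^(m+1)` whenever the series of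
`f` converges absolutely at `ρ`; the constant `1/(m+1)` is absorbed by rescaling `g`.
-/

open Filter Topology Metric FormalMultilinearSeries

section

variable {𝕜 : Type*} [NontriviallyNormedField 𝕜]

theorem hasFPowerSeriesAt_ofScalars_iff {c : ℕ → 𝕜} {h : 𝕜 → 𝕜} :
    HasFPowerSeriesAt h (ofScalars 𝕜 c) 0 ↔ ∀ᶠ z in 𝓝 0, HasSum (fun k ↦ c k * z ^ k) (h z) := by
  simp [hasFPowerSeriesAt_iff, coeff_ofScalars, mul_comm]

theorem HasFPowerSeriesAt.hasSum_deriv [CompleteSpace 𝕜] {h : 𝕜 → 𝕜}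
    {p : FormalMultilinearSeries 𝕜 𝕜 𝕜} (hp : HasFPowerSeriesAt h p 0) :
    ∀ᶠ z in 𝓝 0, HasSum (fun n : ℕ ↦ (n + 1) * p.coeff (n + 1) * z ^ n) (deriv h z) := by
  obtain ⟨r, hr⟩ := hp
  filter_upwards [eball_mem_nhds 0 hr.r_pos] with z hz
  have := (ContinuousLinearMap.apply 𝕜 𝕜 (1 : 𝕜)).hasSum (hr.fderiv.hasSum hz)
  simpa [apply_eq_pow_smul_coeff, fderiv_apply_one_eq_deriv, mul_comm, mul_left_comm,
    mul_assoc] using this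

theorem HasFPowerSeriesAt.mul_deriv_ofScalars [CompleteSpace 𝕜] {c : ℕ → 𝕜} {h : 𝕜 → 𝕜}
    (hh : HasFPowerSeriesAt h (ofScalars 𝕜 c) 0) :
    HasFPowerSeriesAt (fun z ↦ z * deriv h z) (ofScalars 𝕜 fun k ↦ k * c k) 0 := by
  rw [hasFPowerSeriesAt_ofScalars_iff]
  filter_upwards [hh.hasSum_deriv] with z hz
  refine (hasSum_nat_add_iff' 1).mp ?_
  simpa [coeff_ofScalars, pow_succ, mul_comm, mul_left_comm, mul_assoc] using hz.mul_left z

section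

variable {E : Type*} [NormedAddCommGroup E] [NormedSpace 𝕜 E] [CompleteSpace E]

theorem HasFPowerSeriesAt.iteratedDeriv_eq {f : 𝕜 → E} {p : FormalMultilinearSeries 𝕜 𝕜 E}
    {x : 𝕜} (hp : HasFPowerSeriesAt f p x) (n : ℕ) :
    iteratedDeriv n f x = n.factorial • p.coeff n := by
  obtain ⟨r, hr⟩ := hp
  rw [iteratedDeriv_eq_iteratedFDeriv, ← hr.factorial_smul 1 n]
  rfl

theorem HasFPowerSeriesAt.exists_eventuallyEq_pow_smul_iff [CharZero 𝕜] {f : 𝕜 → E}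
    {p : FormalMultilinearSeries 𝕜 𝕜 E} {z₀ : 𝕜} (hp : HasFPowerSeriesAt f p z₀) {N : ℕ} :
    (∃ g, AnalyticAt 𝕜 g z₀ ∧ ∀ᶠ z in 𝓝 z₀, f z = (z - z₀) ^ N • g z) ↔
      ∀ k < N, p.coeff k = 0 := by
  rw [← natCast_le_analyticOrderAt hp.analyticAt,
    natCast_le_analyticOrderAt_iff_iteratedDeriv_eq_zero hp.analyticAt]
  simp [hp.iteratedDeriv_eq, ← Nat.cast_smul_eq_nsmul 𝕜, Nat.factorial_ne_zero]

end

theorem HasFPowerSeriesAt.exists_eventuallyEq_mul_zpow_neg_iff [CompleteSpace 𝕜] [CharZero 𝕜]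
    {G : 𝕜 → 𝕜} {p : FormalMultilinearSeries 𝕜 𝕜 𝕜} (hp : HasFPowerSeriesAt G p 0) (N : ℕ) :
    (∃ F, AnalyticAt 𝕜 F 0 ∧ ∀ᶠ z in 𝓝[≠] 0, G z * z ^ (-(N : ℤ)) = F z) ↔
      ∀ k < N, p.coeff k = 0 := by
  rw [← hp.exists_eventuallyEq_pow_smul_iff]
  refine exists_congr fun F ↦ and_congr_right fun hF ↦ ?_
  have hiff : ∀ z : 𝕜, z ≠ 0 → (G z * z ^ (-(N : ℤ)) = F z ↔ G z = (z - 0) ^ N • F z) :=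
    fun z hz ↦ by
      rw [zpow_neg, zpow_natCast, mul_inv_eq_iff_eq_mul₀ (pow_ne_zero N hz), sub_zero,
        smul_eq_mul, mul_comm]
  constructor
  · intro h
    rw [← hp.analyticAt.frequently_eq_iff_eventually_eq (by fun_prop)]
    refine Eventually.frequently ?_
    filter_upwards [h, self_mem_nhdsWithin] with z hz hz0
    exact (hiff z hz0).1 hz
  · intro h
    filter_upwards [h.filter_mono nhdsWithin_le_nhds, self_mem_nhdsWithin] with z hz hz0
    exact (hiff z hz0).2 hz

noncomputable def iterateNumerator (m : ℕ) (f : 𝕜 → 𝕜) : ℕ → 𝕜 → 𝕜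
  | 0 => f
  | n + 1 => fun z ↦
      z * deriv (iterateNumerator m f n) z - (n * (m + 1) : ℕ) * iterateNumerator m f n z

theorem AnalyticAt.iterateNumerator [CompleteSpace 𝕜] {f : 𝕜 → 𝕜} {z : 𝕜}
    (hf : AnalyticAt 𝕜 f z) (m n : ℕ) : AnalyticAt 𝕜 (iterateNumerator m f n) z := by
  induction n with
  | zero => exact hf
  | succ n ih => exact (analyticAt_id.mul ih.deriv).sub (analyticAt_const.mul ih)

theorem HasFPowerSeriesAt.iterateNumerator [CompleteSpace 𝕜] {f : 𝕜 → 𝕜} {a : ℕ → 𝕜}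
    (hf : HasFPowerSeriesAt f (ofScalars 𝕜 a) 0) (m n : ℕ) :
    HasFPowerSeriesAt (iterateNumerator m f n)
      (ofScalars 𝕜 fun k ↦ (∏ j ∈ Finset.range n, ((k : 𝕜) - (j * (m + 1) : ℕ))) * a k) 0 := by
  induction n with
  | zero =>
    simp only [Finset.range_zero, Finset.prod_empty, one_mul]
    exact hf
  | succ n ih =>
    have := ih.mul_deriv_ofScalars.sub (ih.const_smul (c := ((n * (m + 1) : ℕ) : 𝕜)))
    rw [← ofScalars_smul, ← ofScalars_sub] at this
    convert this using 2
    · rfl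
    · funext k
      simp only [Finset.prod_range_succ, Pi.sub_apply, Pi.smul_apply, smul_eq_mul]
      ring

theorem deriv_mul_zpow_neg_div_pow {G : 𝕜 → 𝕜} {z : 𝕜} (hz : z ≠ 0)
    (hG : DifferentiableAt 𝕜 G z) (N m : ℕ) :
    deriv (fun w ↦ G w * w ^ (-(N : ℤ))) z / z ^ m
      = (z * deriv G z - N * G z) * z ^ (-((N + m + 1 : ℕ) : ℤ)) := by
  rw [(hG.hasDerivAt.fun_mul (hasDerivAt_zpow _ z (.inl hz))).deriv,
    show -(N : ℤ) - 1 = -((N + 1 : ℕ) : ℤ) by push_cast; ring]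
  simp only [zpow_neg, zpow_natCast, Int.cast_neg, Int.cast_natCast]
  field_simp
  ring

theorem iterate_eventuallyEq_iterateNumerator_mul_zpow [CompleteSpace 𝕜] {f : 𝕜 → 𝕜}
    (hf : AnalyticAt 𝕜 f 0) {m : ℕ} {T : (𝕜 → 𝕜) → 𝕜 → 𝕜}
    (hT : ∀ h z, T h z = deriv h z / z ^ m) (n : ℕ) :
    T^[n] f =ᶠ[𝓝[≠] 0] fun z ↦ iterateNumerator m f n z * z ^ (-((n * (m + 1) : ℕ) : ℤ)) := by
  induction n with
  | zero => simp [iterateNumerator]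
  | succ n ih =>
    have hG : ∀ᶠ z in 𝓝 0, AnalyticAt 𝕜 (iterateNumerator m f n) z :=
      hf.eventually_analyticAt.mono fun z hz ↦ hz.iterateNumerator m n
    rw [EventuallyEq, eventually_nhdsWithin_iff] at ih ⊢
    filter_upwards [ih.eventually_nhds, hG] with z hih hGz hz
    have hloc : T^[n] f =ᶠ[𝓝 z]
        fun w ↦ iterateNumerator m f n w * w ^ (-((n * (m + 1) : ℕ) : ℤ)) := by
      filter_upwards [hih, eventually_ne_nhds hz] with w hw hw0 using hw hw0
    rw [Function.iterate_succ_apply', hT, hloc.deriv_eq,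
      deriv_mul_zpow_neg_div_pow hz hGz.differentiableAt,
      show n * (m + 1) + m + 1 = (n + 1) * (m + 1) by ring]
    rfl

theorem prod_range_sub_natCast_mul_eq_zero_iff {R : Type*} [CommRing R] [NoZeroDivisors R]
    [CharZero R] (m n k : ℕ) :
    ∏ j ∈ Finset.range n, ((k : R) - (j * (m + 1) : ℕ)) = 0 ↔ ∃ j < n, k = j * (m + 1) := by
  simp only [Finset.prod_eq_zero_iff, Finset.mem_range, sub_eq_zero, Nat.cast_inj]

theorem forall_prod_range_sub_natCast_mul_mul_eq_zero_iff {R : Type*} [CommRing R]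
    [NoZeroDivisors R] [CharZero R] (m : ℕ) (a : ℕ → R) :
    (∀ n, ∀ k < n * (m + 1), (∏ j ∈ Finset.range n, ((k : R) - (j * (m + 1) : ℕ))) * a k = 0) ↔
      ∀ k, ¬ (m + 1) ∣ k → a k = 0 := by
  constructor
  · intro h k hk
    rcases mul_eq_zero.1 (h (k + 1) k (by nlinarith)) with hprod | hak
    · obtain ⟨j, -, rfl⟩ := (prod_range_sub_natCast_mul_eq_zero_iff m _ _).1 hprod
      exact absurd (dvd_mul_left _ _) hk
    · exact hak
  · intro h n k hk
    by_cases hdvd : (m + 1) ∣ k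
    · obtain ⟨j, rfl⟩ := hdvd
      refine mul_eq_zero_of_left ((prod_range_sub_natCast_mul_eq_zero_iff m _ _).2
        ⟨j, ?_, mul_comm _ _⟩) _
      rw [mul_comm] at hk
      exact lt_of_mul_lt_mul_right hk (Nat.zero_le _)
    · rw [h k hdvd, mul_zero]

theorem hasSum_comp_mul_mul_pow_pow_iff {a : ℕ → 𝕜} {d : ℕ} (hd : d ≠ 0)
    (ha : ∀ k, ¬ d ∣ k → a k = 0) (z : 𝕜) {s : 𝕜} :
    HasSum (fun j ↦ a (d * j) * (z ^ d) ^ j) s ↔ HasSum (fun k ↦ a k * z ^ k) s := by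
  simp_rw [← pow_mul]
  exact (mul_right_injective₀ hd).hasSum_iff (f := fun k ↦ a k * z ^ k) fun k hk ↦ by
    rw [ha k fun ⟨j, hj⟩ ↦ hk ⟨j, hj.symm⟩, zero_mul]

theorem HasFPowerSeriesAt.exists_pos_summable_norm_mul_pow {f : 𝕜 → 𝕜} {a : ℕ → 𝕜}
    (hf : HasFPowerSeriesAt f (ofScalars 𝕜 a) 0) :
    ∃ r : ℝ, 0 < r ∧ Summable fun k ↦ ‖a k‖ * r ^ k := by
  obtain ⟨r, hr0, hr⟩ := ENNReal.lt_iff_exists_nnreal_btwn.1 hf.radius_pos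
  have hs := (ofScalars 𝕜 a).summable_norm_mul_pow hr
  simp only [ofScalars_norm] at hs
  exact ⟨r, by exact_mod_cast hr0, hs⟩

theorem summable_comp_mul_mul_pow [CompleteSpace 𝕜] {a : ℕ → 𝕜} {r : ℝ}
    (hs : Summable fun k ↦ ‖a k‖ * r ^ k) {d : ℕ} (hd : d ≠ 0) {w : 𝕜} (hw : ‖w‖ ≤ r ^ d) :
    Summable fun j ↦ a (d * j) * w ^ j := by
  refine Summable.of_norm_bounded (hs.comp_injective (mul_right_injective₀ hd)) fun j ↦ ?_
  rw [norm_mul, norm_pow, Function.comp_apply, pow_mul]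
  gcongr

theorem HasFPowerSeriesAt.coeff_eq_zero_of_eventuallyEq_comp_pow [CompleteSpace 𝕜] {f g : 𝕜 → 𝕜}
    {a : ℕ → 𝕜} (hf : HasFPowerSeriesAt f (ofScalars 𝕜 a) 0) {d : ℕ} (hd : d ≠ 0)
    (hg : AnalyticAt 𝕜 g 0) (hfg : ∀ᶠ z in 𝓝 0, f z = g (z ^ d)) {k : ℕ} (hk : ¬ d ∣ k) :
    a k = 0 := by
  obtain ⟨q, hq⟩ := hg
  set a' : ℕ → 𝕜 := fun k ↦ if d ∣ k then q.coeff (k / d) else 0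
  have ha' : ∀ k, ¬ d ∣ k → a' k = 0 := fun k hk ↦ if_neg hk
  have hpow : Tendsto (fun z : 𝕜 ↦ z ^ d) (𝓝 0) (𝓝 0) := by
    simpa [zero_pow hd] using (continuous_pow d).tendsto (0 : 𝕜)
  have hfa' : HasFPowerSeriesAt f (ofScalars 𝕜 a') 0 := by
    rw [hasFPowerSeriesAt_ofScalars_iff]
    filter_upwards [hfg, hpow.eventually (hasFPowerSeriesAt_iff.1 hq)] with z hz hgz
    rw [← hasSum_comp_mul_mul_pow_pow_iff hd ha', hz]
    simpa [a', Nat.mul_div_cancel_left _ (Nat.pos_of_ne_zero hd), mul_comm] using hgz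
  rw [ofScalars_series_injective 𝕜 𝕜 (hf.eq_formalMultilinearSeries hfa')]
  exact ha' k hk

theorem HasFPowerSeriesAt.exists_eventuallyEq_comp_pow [CompleteSpace 𝕜] {f : 𝕜 → 𝕜}
    {a : ℕ → 𝕜} (hf : HasFPowerSeriesAt f (ofScalars 𝕜 a) 0) {d : ℕ} (hd : d ≠ 0)
    (ha : ∀ k, ¬ d ∣ k → a k = 0) :
    ∃ g, AnalyticAt 𝕜 g 0 ∧ ∀ᶠ z in 𝓝 0, f z = g (z ^ d) := by
  obtain ⟨r, hr, hs⟩ := hf.exists_pos_summable_norm_mul_pow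
  refine ⟨fun w ↦ ∑' j, a (d * j) * w ^ j, ?_, ?_⟩
  · refine (hasFPowerSeriesAt_ofScalars_iff (c := fun j ↦ a (d * j)).2 ?_).analyticAt
    filter_upwards [ball_mem_nhds 0 (pow_pos hr d)] with w hw
    exact (summable_comp_mul_mul_pow hs hd (mem_ball_zero_iff.1 hw).le).hasSum
  · filter_upwards [hasFPowerSeriesAt_ofScalars_iff.1 hf, ball_mem_nhds 0 hr] with z hz hzr
    have hw : ‖z ^ d‖ ≤ r ^ d := by
      rw [norm_pow]
      gcongr
      exact (mem_ball_zero_iff.1 hzr).le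
    exact hz.unique ((hasSum_comp_mul_mul_pow_pow_iff hd ha z).1
      (summable_comp_mul_mul_pow hs hd hw).hasSum)

theorem HasFPowerSeriesAt.exists_eventuallyEq_comp_pow_iff [CompleteSpace 𝕜] {f : 𝕜 → 𝕜}
    {a : ℕ → 𝕜} (hf : HasFPowerSeriesAt f (ofScalars 𝕜 a) 0) {d : ℕ} (hd : d ≠ 0) :
    (∃ g, AnalyticAt 𝕜 g 0 ∧ ∀ᶠ z in 𝓝 0, f z = g (z ^ d)) ↔ ∀ k, ¬ d ∣ k → a k = 0 :=
  ⟨fun ⟨_, hg, hfg⟩ _ hk ↦ hf.coeff_eq_zero_of_eventuallyEq_comp_pow hd hg hfg hk,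
    hf.exists_eventuallyEq_comp_pow hd⟩

theorem exists_analyticAt_eventuallyEq_comp_div_iff {α E : Type*} [NormedAddCommGroup E]
    [NormedSpace 𝕜 E] {l : Filter α} {f : α → E} {φ : α → 𝕜} {c : 𝕜} (hc : c ≠ 0) :
    (∃ g, AnalyticAt 𝕜 g 0 ∧ ∀ᶠ z in l, f z = g (φ z / c)) ↔
      ∃ g, AnalyticAt 𝕜 g 0 ∧ ∀ᶠ z in l, f z = g (φ z) := by
  constructor
  · rintro ⟨g, hg, hfg⟩
    exact ⟨fun w ↦ g (w / c), hg.comp_of_eq (by fun_prop) (zero_div c), hfg⟩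
  · rintro ⟨g, hg, hfg⟩
    refine ⟨fun w ↦ g (c * w), hg.comp_of_eq (by fun_prop) (mul_zero c), hfg.mono fun z hz ↦ ?_⟩
    rw [hz]
    exact congrArg g (mul_div_cancel₀ _ hc).symm

end

theorem local_factorisation_criterion_general
    (m : ℕ) (f : ℂ → ℂ) (r : ℝ) (hr : 0 < r)
    (a : ℕ → ℂ)
    (ha : ∀ z ∈ Metric.ball (0 : ℂ) r, HasSum (fun k : ℕ => a k * z ^ k) (f z))
    (T : (ℂ → ℂ) → (ℂ → ℂ)) (hT : ∀ h : ℂ → ℂ, ∀ z : ℂ, T h z = deriv h z / z ^ m) :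
    ((∀ n : ℕ, ∃ F : ℂ → ℂ, AnalyticAt ℂ F 0 ∧ ∀ᶠ z in 𝓝[≠] (0 : ℂ), T^[n] f z = F z)
        ↔ (∀ k : ℕ, ¬ (m + 1) ∣ k → a k = 0))
    ∧ ((∀ k : ℕ, ¬ (m + 1) ∣ k → a k = 0)
        ↔ (∃ g : ℂ → ℂ, AnalyticAt ℂ g 0 ∧
            ∀ᶠ z in 𝓝 (0 : ℂ), f z = g (z ^ (m + 1) / ((m : ℂ) + 1)))) := by
  have hfa : HasFPowerSeriesAt f (ofScalars ℂ a) 0 :=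
    hasFPowerSeriesAt_ofScalars_iff.2 (eventually_of_mem (ball_mem_nhds 0 hr) ha)
  refine ⟨?_, ?_⟩
  · calc (∀ n : ℕ, ∃ F : ℂ → ℂ, AnalyticAt ℂ F 0 ∧ ∀ᶠ z in 𝓝[≠] (0 : ℂ), T^[n] f z = F z)
        ↔ ∀ n : ℕ, ∃ F : ℂ → ℂ, AnalyticAt ℂ F 0 ∧ ∀ᶠ z in 𝓝[≠] (0 : ℂ),
            iterateNumerator m f n z * z ^ (-((n * (m + 1) : ℕ) : ℤ)) = F z :=
          forall_congr' fun n ↦ exists_congr fun _ ↦ and_congr_right fun _ ↦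
            (iterate_eventuallyEq_iterateNumerator_mul_zpow hfa.analyticAt hT n).congr_left
      _ ↔ ∀ n, ∀ k < n * (m + 1),
            (∏ j ∈ Finset.range n, ((k : ℂ) - (j * (m + 1) : ℕ))) * a k = 0 :=
          forall_congr' fun n ↦ by
            simpa only [coeff_ofScalars] using
              (hfa.iterateNumerator m n).exists_eventuallyEq_mul_zpow_neg_iff (n * (m + 1))
      _ ↔ _ := forall_prod_range_sub_natCast_mul_mul_eq_zero_iff m a
  · rw [exists_analyticAt_eventuallyEq_comp_div_iff (Nat.cast_add_one_ne_zero m),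
      hfa.exists_eventuallyEq_comp_pow_iff m.succ_ne_zero]

/-- **Local factorisation criterion (Lemma 3.1 in a local chart).** For `f`
holomorphic near `0` with Taylor coefficients `a k`, and the operator
`T : h ↦ (z ↦ h′(z)·z^{−m})`, the following are equivalent: (i) no iterate
`T^[n] f` develops a pole at `0`; (ii) `a k = 0` unless `(m+1) ∣ k`;
(iii) `f` is locally factorised as `g (z^{m+1}/(m+1))` for some `g`
holomorphic near `0`. -/
theorem local_factorisation_criterion
    (m : ℕ) (f : ℂ → ℂ) (r : ℝ) (hr : 0 < r)
    (hf : DifferentiableOn ℂ f (Metric.ball (0 : ℂ) r))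
    (a : ℕ → ℂ)
    (ha : ∀ z ∈ Metric.ball (0 : ℂ) r, HasSum (fun k : ℕ => a k * z ^ k) (f z))
    (T : (ℂ → ℂ) → (ℂ → ℂ)) (hT : ∀ h : ℂ → ℂ, ∀ z : ℂ, T h z = deriv h z / z ^ m) :
    ((∀ n : ℕ, ∃ F : ℂ → ℂ, AnalyticAt ℂ F 0 ∧ ∀ᶠ z in 𝓝[≠] (0 : ℂ), T^[n] f z = F z)
        ↔ (∀ k : ℕ, ¬ (m + 1) ∣ k → a k = 0))
    ∧ ((∀ k : ℕ, ¬ (m + 1) ∣ k → a k = 0)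
        ↔ (∃ g : ℂ → ℂ, AnalyticAt ℂ g 0 ∧
            ∀ᶠ z in 𝓝 (0 : ℂ), f z = g (z ^ (m + 1) / ((m : ℂ) + 1)))) :=
  local_factorisation_criterion_general m f r hr a ha T hT
end

section
/- Let a ∈ ℕ, m ≥ 1, and let f be holomorphic on a punctured disk D(0,r) ∖ {0} with a pole of order m at 0 (i.e. z^m f(z) extends holomorphically to 0 with nonzero value there). Define f₀ = f and f_{n+1}(z) = f_n′(z)·z^{−a} on the punctured disk. Then for every n ∈ ℕ, f_n has a pole of order exactly m + n(a + 1) at 0. Moreover: (a) if instead g₀ = f and g_{n+1}(z) = z·g_n′(z), then g_n has a pole of order exactly m at 0 for every n; (b) if s ≥ 2 is an integer, h₀ = f and h_{n+1}(z) = z^s·h_n′(z), then there exists N ∈ ℕ such that h_n extends holomorphically to 0 for all n ≥ N. -/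
/-!
Near `0` write a function as `g z * z ^ t` with `g` analytic. Then
`(g z * z ^ t)' = (z * g' z + t * g z) * z ^ (t - 1)`, and the new analytic factor takes the value
`t * g 0` at `0`. So each of the three recursions `Φ (n + 1) = Φ n' * z ^ c` (with `c = -a`, `1`, `s`)
shifts the exponent by `c - 1` and multiplies the leading coefficient by the current exponent.
Starting from `t = -m`, the exponent stays negative for `c = -a` and stays `-m` for `c = 1`, so
the leading coefficient never vanishes; for `c = s ≥ 2` the exponent `-m + n (s - 1)` is
nonnegative once `n ≥ m`.
-/

open Filter Topology

section LaurentMonomial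

variable {𝕜 : Type*} [NontriviallyNormedField 𝕜] [CompleteSpace 𝕜] {f g : 𝕜 → 𝕜}

theorem deriv_eventuallyEq_mul_zpow (hg : AnalyticAt 𝕜 g 0) {t : ℤ}
    (hf : f =ᶠ[𝓝[≠] 0] fun z ↦ g z * z ^ t) :
    deriv f =ᶠ[𝓝[≠] 0] fun z ↦ (z * deriv g z + t * g z) * z ^ (t - 1) := by
  filter_upwards [hf.nhdsNE_deriv, hg.eventually_analyticAt.filter_mono nhdsWithin_le_nhds,
    self_mem_nhdsWithin] with z hfz hgz (hz : z ≠ 0)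
  rw [hfz, (hgz.differentiableAt.hasDerivAt.fun_mul (hasDerivAt_zpow t z (.inl hz))).deriv,
    ← sub_add_cancel t 1, zpow_add_one₀ hz, add_sub_cancel_right]
  ring

theorem exists_eventuallyEq_mul_zpow_of_deriv_mul_zpow {Φ : ℕ → 𝕜 → 𝕜} {c t₀ : ℤ} {g₀ : 𝕜 → 𝕜}
    (hg₀ : AnalyticAt 𝕜 g₀ 0) (h₀ : Φ 0 =ᶠ[𝓝[≠] 0] fun z ↦ g₀ z * z ^ t₀)
    (hstep : ∀ n, Φ (n + 1) =ᶠ[𝓝[≠] 0] fun z ↦ deriv (Φ n) z * z ^ c) (n : ℕ) :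
    ∃ g : 𝕜 → 𝕜, AnalyticAt 𝕜 g 0 ∧
      g 0 = (∏ i ∈ Finset.range n, ((t₀ + i * (c - 1) : ℤ) : 𝕜)) * g₀ 0 ∧
      Φ n =ᶠ[𝓝[≠] 0] fun z ↦ g z * z ^ (t₀ + n * (c - 1)) := by
  induction n with
  | zero => exact ⟨g₀, hg₀, by simp, by simpa using h₀⟩
  | succ n ih =>
    obtain ⟨g, hg, hg0, hΦ⟩ := ih
    set t := t₀ + n * (c - 1)
    refine ⟨fun z ↦ z * deriv g z + t * g z, by fun_prop, ?_, ?_⟩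
    · simp only [zero_mul, zero_add, hg0, Finset.prod_range_succ]
      ring
    · filter_upwards [hstep n, deriv_eventuallyEq_mul_zpow hg hΦ, self_mem_nhdsWithin]
        with z hstep_z hderiv_z (hz : z ≠ 0)
      rw [hstep_z, hderiv_z, mul_assoc, ← zpow_add₀ hz]
      congr 2
      push_cast
      ring

variable {F : ℕ → 𝕜 → 𝕜} {g₀ : 𝕜 → 𝕜} {m : ℕ}

theorem exists_pole_of_iterate_deriv_div_pow [CharZero 𝕜] {a : ℕ} (hm : 1 ≤ m)
    (hg₀ : AnalyticAt 𝕜 g₀ 0) (hg₀0 : g₀ 0 ≠ 0) (h₀ : F 0 =ᶠ[𝓝[≠] 0] fun z ↦ g₀ z / z ^ m)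
    (hstep : ∀ n z, F (n + 1) z = deriv (F n) z / z ^ a) (n : ℕ) :
    ∃ g : 𝕜 → 𝕜, AnalyticAt 𝕜 g 0 ∧ g 0 ≠ 0 ∧
      F n =ᶠ[𝓝[≠] 0] fun z ↦ g z / z ^ (m + n * (a + 1)) := by
  obtain ⟨g, hg, hg0, hF⟩ := exists_eventuallyEq_mul_zpow_of_deriv_mul_zpow (Φ := F)
    (t₀ := -m) (c := -a) hg₀ (by simpa [div_eq_mul_inv] using h₀)
    (fun n ↦ .of_forall fun z ↦ by simp [hstep, div_eq_mul_inv]) n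
  refine ⟨g, hg, ?_, ?_⟩
  · rw [hg0]
    refine mul_ne_zero (Finset.prod_ne_zero_iff.mpr fun i _ ↦ Int.cast_ne_zero.mpr ?_) hg₀0
    nlinarith
  · convert hF using 3 with z
    rw [div_eq_mul_inv, ← zpow_natCast, ← zpow_neg]
    push_cast
    ring_nf

theorem exists_pole_of_iterate_mul_deriv [CharZero 𝕜] (hm : 1 ≤ m)
    (hg₀ : AnalyticAt 𝕜 g₀ 0) (hg₀0 : g₀ 0 ≠ 0) (h₀ : F 0 =ᶠ[𝓝[≠] 0] fun z ↦ g₀ z / z ^ m)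
    (hstep : ∀ n z, F (n + 1) z = z * deriv (F n) z) (n : ℕ) :
    ∃ g : 𝕜 → 𝕜, AnalyticAt 𝕜 g 0 ∧ g 0 ≠ 0 ∧ F n =ᶠ[𝓝[≠] 0] fun z ↦ g z / z ^ m := by
  obtain ⟨g, hg, hg0, hF⟩ := exists_eventuallyEq_mul_zpow_of_deriv_mul_zpow (Φ := F)
    (t₀ := -m) (c := 1) hg₀ (by simpa [div_eq_mul_inv] using h₀)
    (fun n ↦ .of_forall fun z ↦ by simp [hstep, mul_comm]) n
  refine ⟨g, hg, ?_, ?_⟩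
  · rw [hg0]
    refine mul_ne_zero (Finset.prod_ne_zero_iff.mpr fun i _ ↦ Int.cast_ne_zero.mpr ?_) hg₀0
    omega
  · simpa [div_eq_mul_inv] using hF

theorem exists_analyticAt_of_iterate_pow_mul_deriv {s : ℕ} (hs : 2 ≤ s)
    (hg₀ : AnalyticAt 𝕜 g₀ 0) (h₀ : F 0 =ᶠ[𝓝[≠] 0] fun z ↦ g₀ z / z ^ m)
    (hstep : ∀ n z, F (n + 1) z = z ^ s * deriv (F n) z) {n : ℕ} (hn : m ≤ n) :
    ∃ g : 𝕜 → 𝕜, AnalyticAt 𝕜 g 0 ∧ F n =ᶠ[𝓝[≠] 0] g := by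
  obtain ⟨g, hg, -, hF⟩ := exists_eventuallyEq_mul_zpow_of_deriv_mul_zpow (Φ := F)
    (t₀ := -m) (c := s) hg₀ (by simpa [div_eq_mul_inv] using h₀)
    (fun n ↦ .of_forall fun z ↦ by simp [hstep, mul_comm]) n
  obtain ⟨k, hk⟩ : ∃ k : ℕ, -(m : ℤ) + n * (s - 1) = k :=
    Int.eq_ofNat_of_zero_le (by nlinarith)
  exact ⟨fun z ↦ g z * z ^ k, by fun_prop, by simpa [hk] using hF⟩

end LaurentMonomial

theorem pole_order_growth_local_general
    (a m s : ℕ) (hm : 1 ≤ m) (hs : 2 ≤ s)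
    (f : ℂ → ℂ)
    (g₀ : ℂ → ℂ) (hg₀ : AnalyticAt ℂ g₀ 0) (hg₀0 : g₀ 0 ≠ 0)
    (hfg : ∀ᶠ z in 𝓝[≠] (0 : ℂ), f z = g₀ z / z ^ m)
    (F G H : ℕ → ℂ → ℂ)
    (hF0 : F 0 = f) (hFs : ∀ n : ℕ, ∀ z : ℂ, F (n + 1) z = deriv (F n) z / z ^ a)
    (hG0 : G 0 = f) (hGs : ∀ n : ℕ, ∀ z : ℂ, G (n + 1) z = z * deriv (G n) z)
    (hH0 : H 0 = f) (hHs : ∀ n : ℕ, ∀ z : ℂ, H (n + 1) z = z ^ s * deriv (H n) z) :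
    (∀ n : ℕ, ∃ g : ℂ → ℂ, AnalyticAt ℂ g 0 ∧ g 0 ≠ 0 ∧
        ∀ᶠ z in 𝓝[≠] (0 : ℂ), F n z = g z / z ^ (m + n * (a + 1)))
    ∧ (∀ n : ℕ, ∃ g : ℂ → ℂ, AnalyticAt ℂ g 0 ∧ g 0 ≠ 0 ∧
        ∀ᶠ z in 𝓝[≠] (0 : ℂ), G n z = g z / z ^ m)
    ∧ (∃ N : ℕ, ∀ n ≥ N, ∃ g : ℂ → ℂ, AnalyticAt ℂ g 0 ∧
        ∀ᶠ z in 𝓝[≠] (0 : ℂ), H n z = g z) := by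
  subst hF0
  exact ⟨exists_pole_of_iterate_deriv_div_pow hm hg₀ hg₀0 hfg hFs,
    exists_pole_of_iterate_mul_deriv hm hg₀ hg₀0 (hG0 ▸ hfg) hGs,
    m, fun _ hn ↦ exists_analyticAt_of_iterate_pow_mul_deriv hs hg₀ (hH0 ▸ hfg) hHs hn⟩

/-- **Growth of pole orders under the local models of `T_ω` (Proposition 3.3,
local charts).** If `f` has a pole of order `m ≥ 1` at `0`, then: the iterates
`f_{n+1}(z) = f_n′(z)·z^{−a}` have a pole of order exactly `m + n(a+1)` at `0`;
(a) the iterates `g_{n+1}(z) = z·g_n′(z)` have a pole of order exactly `m`;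
(b) for `s ≥ 2`, the iterates `h_{n+1}(z) = z^s·h_n′(z)` eventually extend
holomorphically to `0`. -/
theorem pole_order_growth_local
    (a m s : ℕ) (hm : 1 ≤ m) (hs : 2 ≤ s)
    (r : ℝ) (hr : 0 < r) (f : ℂ → ℂ)
    (hf : DifferentiableOn ℂ f (Metric.ball (0 : ℂ) r \ {0}))
    (g₀ : ℂ → ℂ) (hg₀ : AnalyticAt ℂ g₀ 0) (hg₀0 : g₀ 0 ≠ 0)
    (hfg : ∀ᶠ z in 𝓝[≠] (0 : ℂ), f z = g₀ z / z ^ m)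
    (F G H : ℕ → ℂ → ℂ)
    (hF0 : F 0 = f) (hFs : ∀ n : ℕ, ∀ z : ℂ, F (n + 1) z = deriv (F n) z / z ^ a)
    (hG0 : G 0 = f) (hGs : ∀ n : ℕ, ∀ z : ℂ, G (n + 1) z = z * deriv (G n) z)
    (hH0 : H 0 = f) (hHs : ∀ n : ℕ, ∀ z : ℂ, H (n + 1) z = z ^ s * deriv (H n) z) :
    (∀ n : ℕ, ∃ g : ℂ → ℂ, AnalyticAt ℂ g 0 ∧ g 0 ≠ 0 ∧
        ∀ᶠ z in 𝓝[≠] (0 : ℂ), F n z = g z / z ^ (m + n * (a + 1)))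
    ∧ (∀ n : ℕ, ∃ g : ℂ → ℂ, AnalyticAt ℂ g 0 ∧ g 0 ≠ 0 ∧
        ∀ᶠ z in 𝓝[≠] (0 : ℂ), G n z = g z / z ^ m)
    ∧ (∃ N : ℕ, ∀ n ≥ N, ∃ g : ℂ → ℂ, AnalyticAt ℂ g 0 ∧
        ∀ᶠ z in 𝓝[≠] (0 : ℂ), H n z = g z) :=
  pole_order_growth_local_general a m s hm hs f g₀ hg₀ hg₀0 hfg F G H hF0 hFs hG0 hGs hH0 hHs
end

section
/- Let ρ > 0 be finite and let g be holomorphic on the open disk D(0,ρ) ⊆ ℂ such that g does not extend holomorphically to any disk D(0,ρ′) with ρ′ > ρ (i.e. ρ is exactly the radius of convergence of the Taylor series of g at 0). Suppose that at every boundary point d with |d| = ρ, either g extends holomorphically at d or g extends as a singular convergent Puiseux series at d. Then the set of boundary points at which g does not extend holomorphically is finite and nonempty. -/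
/-!
Near a boundary point `d` with a Puiseux expansion, the substitution `w = (1 - z/d)^{1/M}`
turns the expansion into a Laurent series in `w` that converges absolutely on a punctured
disc; so it defines a holomorphic function on the half-disc `{Re (1 - z/d) > 0, |1 - z/d| < R^M}`,
which contains every boundary point close to `d` other than `d` itself. Hence the boundary points
where `g` does not extend form a discrete subset of the compact circle, and there are finitely
many. If there were none, the local extensions would agree on overlaps (two balls centred in the
closed disc that meet also meet the open disc, and the identity theorem applies on their convex
intersection), and gluing them with `g` would extend `g` to a strictly larger disc.
-/

open Complex Metric Filter Set Topology

/-- `f`, holomorphic on the disk `D(0,ρ)`, extends holomorphically at the boundary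
point `d`: there are an open neighbourhood `W` of `d` and a holomorphic function on
`W` agreeing with `f` on `W ∩ D(0,ρ)`. -/
def ExtendsHolomorphicallyAt (f : ℂ → ℂ) (ρ : ℝ) (d : ℂ) : Prop :=
  ∃ W : Set ℂ, IsOpen W ∧ d ∈ W ∧ ∃ h : ℂ → ℂ,
    DifferentiableOn ℂ h W ∧ ∀ z ∈ W ∩ Metric.ball (0 : ℂ) ρ, h z = f z

/-- `f`, holomorphic on the disk `D(0,ρ)`, extends as a singular convergent Puiseux
series at the boundary point `d`: there are `M ≥ 1`, `k₀ ∈ ℤ`, coefficients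
`(c k)_{k ≥ k₀}` with `c k₀ ≠ 0` and `c k ≠ 0` for at least one `k` that is negative
or not divisible by `M`, and `ε > 0` such that for `|z| < ρ`, `0 < |z − d| < ε` the
series `Σ_k c k · exp((k/M)·Log(1 − z/d))` converges absolutely to `f z`. -/
def ExtendsAsSingularPuiseuxAt (f : ℂ → ℂ) (ρ : ℝ) (d : ℂ) : Prop :=
  ∃ (M : ℕ) (k₀ : ℤ) (c : ℤ → ℂ) (ε : ℝ), 1 ≤ M ∧ 0 < ε ∧
    c k₀ ≠ 0 ∧ (∀ k : ℤ, k < k₀ → c k = 0) ∧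
    (∃ k : ℤ, c k ≠ 0 ∧ (k < 0 ∨ ¬ ((M : ℤ) ∣ k))) ∧
    ∀ z : ℂ, ‖z‖ < ρ → z ≠ d → ‖z - d‖ < ε →
      (Summable fun k : ℤ =>
        ‖c k * Complex.exp ((k : ℂ) / (M : ℂ) * Complex.log (1 - z / d))‖) ∧
      HasSum (fun k : ℤ =>
        c k * Complex.exp ((k : ℂ) / (M : ℂ) * Complex.log (1 - z / d))) (f z)

section Geometry

variable {E : Type*} [NormedAddCommGroup E] [InnerProductSpace ℝ E]

lemma norm_smul_sub_le_of_norm_le {ρ : ℝ} {x e : E} (hx : ρ ≤ ‖x‖) (he : ‖e‖ ≤ ρ) :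
    ‖(ρ / ‖x‖) • x - e‖ ≤ ‖x - e‖ := by
  rcases eq_or_ne x 0 with rfl | hx0
  · simp
  have hρ : 0 ≤ ρ := (norm_nonneg e).trans he
  replace hx0 : 0 < ‖x‖ := norm_pos_iff.2 hx0
  set a := ‖x‖
  have hinner : inner ℝ x e ≤ a * ρ := (real_inner_le_norm x e).trans (by gcongr)
  have ht : ρ / a * a = ρ := div_mul_cancel₀ ρ hx0.ne'
  have h1t : 0 ≤ 1 - ρ / a := sub_nonneg.2 ((div_le_one hx0).2 hx)
  have hsq : ‖(ρ / a) • x - e‖ ^ 2 + (a - ρ) ^ 2 ≤ ‖x - e‖ ^ 2 := by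
    rw [norm_sub_sq_real, norm_sub_sq_real, real_inner_smul_left, norm_smul,
      Real.norm_of_nonneg (div_nonneg hρ hx0.le), ht]
    nlinarith [mul_le_mul_of_nonneg_left hinner h1t]
  exact le_of_pow_le_pow_left₀ two_ne_zero (norm_nonneg _) (by nlinarith [sq_nonneg (a - ρ)])

lemma ball_inter_ball_inter_ball_zero_nonempty {ρ r r' : ℝ} {d d' x : E} (hρ : 0 < ρ)
    (hd : ‖d‖ ≤ ρ) (hd' : ‖d'‖ ≤ ρ) (hx : x ∈ ball d r ∩ ball d' r') :
    (ball d r ∩ ball d' r' ∩ ball 0 ρ).Nonempty := by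
  obtain ⟨y, hy, hyρ⟩ : ∃ y ∈ ball d r ∩ ball d' r', ‖y‖ ≤ ρ := by
    rcases le_or_gt ‖x‖ ρ with h | h
    · exact ⟨x, hx, h⟩
    refine ⟨(ρ / ‖x‖) • x, ⟨?_, ?_⟩, ?_⟩
    · simp only [mem_inter_iff, mem_ball, dist_eq_norm] at hx ⊢
      exact (norm_smul_sub_le_of_norm_le h.le hd).trans_lt hx.1
    · simp only [mem_inter_iff, mem_ball, dist_eq_norm] at hx ⊢
      exact (norm_smul_sub_le_of_norm_le h.le hd').trans_lt hx.2
    · rw [norm_smul, Real.norm_of_nonneg (by positivity), div_mul_cancel₀ ρ (hρ.trans h).ne']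
  have hyc : y ∈ closure (ball (0 : E) ρ) := by
    rwa [closure_ball 0 hρ.ne', mem_closedBall_zero_iff]
  exact mem_closure_iff.1 hyc _ (isOpen_ball.inter isOpen_ball) hy

end Geometry

section Gluing

variable {g : ℂ → ℂ} {ρ : ℝ}

lemma eqOn_ball_inter_ball_of_eqOn {h₁ h₂ : ℂ → ℂ} {r₁ r₂ : ℝ} {d₁ d₂ : ℂ} (hρ : 0 < ρ)
    (hd₁ : ‖d₁‖ ≤ ρ) (hd₂ : ‖d₂‖ ≤ ρ)
    (hh₁ : DifferentiableOn ℂ h₁ (ball d₁ r₁)) (hh₂ : DifferentiableOn ℂ h₂ (ball d₂ r₂))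
    (hg₁ : EqOn h₁ g (ball d₁ r₁ ∩ ball 0 ρ)) (hg₂ : EqOn h₂ g (ball d₂ r₂ ∩ ball 0 ρ)) :
    EqOn h₁ h₂ (ball d₁ r₁ ∩ ball d₂ r₂) := by
  intro z hz
  set V := ball d₁ r₁ ∩ ball d₂ r₂
  have hV : IsOpen V := isOpen_ball.inter isOpen_ball
  obtain ⟨y, hyV, hy⟩ := ball_inter_ball_inter_ball_zero_nonempty hρ hd₁ hd₂ hz
  have hyeq : h₁ =ᶠ[𝓝 y] h₂ := by
    filter_upwards [(hV.inter isOpen_ball).mem_nhds ⟨hyV, hy⟩] with w hw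
    rw [hg₁ ⟨hw.1.1, hw.2⟩, hg₂ ⟨hw.1.2, hw.2⟩]
  exact ((hh₁.mono inter_subset_left).analyticOnNhd hV).eqOn_of_preconnected_of_eventuallyEq
    ((hh₂.mono inter_subset_right).analyticOnNhd hV)
    ((convex_ball d₁ r₁).inter (convex_ball d₂ r₂)).isPreconnected hyV hyeq hz

theorem exists_differentiableOn_ball_of_cover {ι : Type*} (hρ : 0 < ρ)
    (hg : DifferentiableOn ℂ g (ball 0 ρ)) (d : ι → ℂ) (r : ι → ℝ) (h : ι → ℂ → ℂ)
    (hd : ∀ i, ‖d i‖ ≤ ρ) (hh : ∀ i, DifferentiableOn ℂ (h i) (ball (d i) (r i)))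
    (hhg : ∀ i, EqOn (h i) g (ball (d i) (r i) ∩ ball 0 ρ))
    (hcover : sphere (0 : ℂ) ρ ⊆ ⋃ i, ball (d i) (r i)) :
    ∃ ρ' > ρ, ∃ F : ℂ → ℂ, DifferentiableOn ℂ F (ball 0 ρ') ∧ EqOn F g (ball 0 ρ) := by
  classical
  set U := ball (0 : ℂ) ρ ∪ ⋃ i, ball (d i) (r i)
  let F : ℂ → ℂ := fun z =>
    if z ∈ ball 0 ρ then g z else if hz : ∃ i, z ∈ ball (d i) (r i) then h hz.choose z else 0
  have hFg : EqOn F g (ball 0 ρ) := fun z hz => if_pos hz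
  have hFh : ∀ i, EqOn F (h i) (ball (d i) (r i)) := by
    intro i z hz
    by_cases hz₀ : z ∈ ball 0 ρ
    · rw [hFg hz₀, hhg i ⟨hz, hz₀⟩]
    have hex : ∃ j, z ∈ ball (d j) (r j) := ⟨i, hz⟩
    simp only [F, if_neg hz₀, dif_pos hex]
    exact eqOn_ball_inter_ball_of_eqOn hρ (hd _) (hd i) (hh _) (hh i) (hhg _) (hhg i)
      ⟨hex.choose_spec, hz⟩
  have hFU : DifferentiableOn ℂ F U := by
    rintro z (hz | hz)
    · exact ((hg.congr hFg).differentiableAt (isOpen_ball.mem_nhds hz)).differentiableWithinAt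
    · obtain ⟨i, hi⟩ := mem_iUnion.1 hz
      exact (((hh i).congr (hFh i)).differentiableAt
        (isOpen_ball.mem_nhds hi)).differentiableWithinAt
  have hUopen : IsOpen U := isOpen_ball.union (isOpen_iUnion fun _ => isOpen_ball)
  have hU : closedBall (0 : ℂ) ρ ⊆ U := by
    rw [← ball_union_sphere]
    exact union_subset_union_right _ hcover
  obtain ⟨δ, hδ, hδU⟩ := (isCompact_closedBall (0 : ℂ) ρ).exists_thickening_subset_open hUopen hU
  refine ⟨δ + ρ, by linarith, F, hFU.mono ?_, hFg⟩
  rwa [← thickening_closedBall hδ hρ.le]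

end Gluing

lemma ExtendsHolomorphicallyAt.exists_ball {f : ℂ → ℂ} {ρ : ℝ} {d : ℂ}
    (h : ExtendsHolomorphicallyAt f ρ d) :
    ∃ r > 0, ∃ F : ℂ → ℂ, DifferentiableOn ℂ F (ball d r) ∧ EqOn F f (ball d r ∩ ball 0 ρ) := by
  obtain ⟨W, hW, hdW, F, hF, hFf⟩ := h
  obtain ⟨r, hr, hrW⟩ := Metric.isOpen_iff.1 hW d hdW
  exact ⟨r, hr, F, hF.mono hrW, fun z hz => hFf z ⟨hrW hz.1, hz.2⟩⟩

lemma isOpen_setOf_extendsHolomorphicallyAt (f : ℂ → ℂ) (ρ : ℝ) :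
    IsOpen {d | ExtendsHolomorphicallyAt f ρ d} :=
  isOpen_iff_forall_mem_open.2 fun _ ⟨W, hW, hdW, F, hF, hFf⟩ =>
    ⟨W, fun _ hy => ⟨W, hW, hy, F, hF, hFf⟩, hW, hdW⟩

theorem exists_extension_of_forall_extendsHolomorphicallyAt {g : ℂ → ℂ} {ρ : ℝ} (hρ : 0 < ρ)
    (hg : DifferentiableOn ℂ g (ball 0 ρ))
    (hall : ∀ d : ℂ, ‖d‖ = ρ → ExtendsHolomorphicallyAt g ρ d) :
    ∃ ρ' > ρ, ∃ F : ℂ → ℂ, DifferentiableOn ℂ F (ball 0 ρ') ∧ EqOn F g (ball 0 ρ) := by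
  choose r hr F hF hFg using fun x : sphere (0 : ℂ) ρ =>
    (hall x (norm_eq_of_mem_sphere x)).exists_ball
  exact exists_differentiableOn_ball_of_cover hρ hg (↑) r F (fun x => (norm_eq_of_mem_sphere x).le)
    hF hFg fun x hx => mem_iUnion.2 ⟨⟨x, hx⟩, mem_ball_self (hr _)⟩

lemma zpow_le_zpow_add_zpow {t s x : ℝ} (ht : 0 < t) (htx : t ≤ x) (hxs : x ≤ s) (k : ℤ) :
    x ^ k ≤ t ^ k + s ^ k := by
  rcases le_or_gt 0 k with hk | hk
  · exact (zpow_le_zpow_left₀ hk (ht.le.trans htx) hxs).trans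
      (le_add_of_nonneg_left (zpow_nonneg ht.le k))
  · have hx : 0 < x := ht.trans_le htx
    calc x ^ k = x⁻¹ ^ (-k) := by rw [inv_zpow', neg_neg]
      _ ≤ t⁻¹ ^ (-k) := zpow_le_zpow_left₀ (by lia) (by positivity) (inv_anti₀ ht htx)
      _ = t ^ k := by rw [inv_zpow', neg_neg]
      _ ≤ t ^ k + s ^ k := le_add_of_nonneg_right (zpow_nonneg (ht.trans_le (htx.trans hxs)).le k)

theorem differentiableOn_tsum_mul_zpow {c : ℤ → ℂ} {r R : ℝ} (hr : 0 ≤ r)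
    (hc : ∀ s ∈ Ioo r R, Summable fun k => ‖c k‖ * s ^ k) :
    DifferentiableOn ℂ (fun w => ∑' k, c k * w ^ k) {w | r < ‖w‖ ∧ ‖w‖ < R} := by
  intro w₀ hw₀
  obtain ⟨t, hrt, ht⟩ := exists_between hw₀.1
  obtain ⟨s, hs, hsR⟩ := exists_between hw₀.2
  set A := {w : ℂ | t < ‖w‖ ∧ ‖w‖ < s}
  have hA : IsOpen A :=
    (isOpen_lt continuous_const continuous_norm).inter (isOpen_lt continuous_norm continuous_const)
  have ht0 : 0 < t := hr.trans_lt hrt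
  have hdiff : DifferentiableOn ℂ (fun w => ∑' k, c k * w ^ k) A := by
    refine differentiableOn_tsum_of_summable_norm
      ((hc t ⟨hrt, ht.trans hw₀.2⟩).add (hc s ⟨hw₀.1.trans hs, hsR⟩)) (fun k => ?_) hA
      (fun k w hw => ?_)
    · refine (differentiableOn_zpow k A (Or.inl fun h0 => ?_)).const_mul (c k)
      simpa using ht0.trans h0.1
    · rw [norm_mul, norm_zpow, ← mul_add]
      exact mul_le_mul_of_nonneg_left (zpow_le_zpow_add_zpow ht0 hw.1.le hw.2.le k) (norm_nonneg _)
  exact (hdiff.differentiableAt (hA.mem_nhds ⟨ht, hs⟩)).differentiableWithinAt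

noncomputable def puiseuxSum (M : ℕ) (c : ℤ → ℂ) (w : ℂ) : ℂ :=
  ∑' k : ℤ, c k * exp (log w / M) ^ k

lemma exp_div_natCast_mul_log (k : ℤ) (M : ℕ) (w : ℂ) :
    exp (k / M * log w) = exp (log w / M) ^ k := by
  rw [← exp_int_mul]
  ring_nf

lemma exp_log_div_natCast_pow {M : ℕ} (hM : M ≠ 0) {w : ℂ} (hw : w ≠ 0) :
    exp (log w / M) ^ M = w := by
  rw [← exp_nat_mul, mul_div_cancel₀ _ (Nat.cast_ne_zero.2 hM), exp_log hw]

theorem differentiableOn_puiseuxSum {M : ℕ} (hM : M ≠ 0) {c : ℤ → ℂ} {R : ℝ} (hR : 0 ≤ R)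
    (hc : ∀ s ∈ Ioo 0 R, Summable fun k => ‖c k‖ * s ^ k) :
    DifferentiableOn ℂ (puiseuxSum M c) {w | 0 < w.re ∧ ‖w‖ < R ^ M} := by
  refine (differentiableOn_tsum_mul_zpow le_rfl hc).comp (fun w hw => ?_) (fun w hw => ?_)
  · exact ((differentiableAt_id.clog (Or.inl hw.1)).div_const _).cexp.differentiableWithinAt
  · have hw0 : w ≠ 0 := fun h => by simp [h] at hw
    refine ⟨norm_pos_iff.2 (exp_ne_zero _), lt_of_pow_lt_pow_left₀ M hR ?_⟩
    rw [← norm_pow, exp_log_div_natCast_pow hM hw0]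
    exact hw.2

lemma re_lt_one_of_norm_eq_one {w : ℂ} (hw : ‖w‖ = 1) (hw1 : w ≠ 1) : w.re < 1 := by
  refine ((re_le_norm w).trans_eq hw).lt_of_ne fun hre => hw1 ?_
  exact Complex.ext hre (abs_re_eq_norm.1 (by rw [hre, hw, abs_one]))

lemma norm_one_sub_div_mul_norm (z : ℂ) {d : ℂ} (hd : d ≠ 0) : ‖1 - z / d‖ * ‖d‖ = ‖z - d‖ := by
  rw [← norm_mul, sub_mul, div_mul_cancel₀ z hd, one_mul, norm_sub_rev]

section PuiseuxPoint

variable {f : ℂ → ℂ} {ρ ε : ℝ} {M : ℕ} {c : ℤ → ℂ} {d : ℂ}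

lemma summable_norm_mul_zpow_of_puiseux (hρ : 0 < ρ) (hd : ‖d‖ = ρ) (hM : M ≠ 0)
    (hsum : ∀ z : ℂ, ‖z‖ < ρ → z ≠ d → ‖z - d‖ < ε →
      Summable fun k : ℤ => ‖c k * exp ((k : ℂ) / (M : ℂ) * log (1 - z / d))‖)
    {s : ℝ} (hs : s ∈ Ioo 0 (min 1 (ε / ρ))) :
    Summable fun k : ℤ => ‖c k‖ * s ^ k := by
  obtain ⟨hs0, hs1, hsε⟩ : 0 < s ∧ s < 1 ∧ s < ε / ρ := ⟨hs.1, lt_min_iff.1 hs.2⟩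
  have hd0 : d ≠ 0 := norm_pos_iff.1 (hd ▸ hρ)
  have hsM : 0 < s ^ M ∧ s ^ M < 1 := ⟨pow_pos hs0 M, pow_lt_one₀ hs0.le hs1 hM⟩
  set z := d * ((1 - s ^ M : ℝ) : ℂ)
  have hz : 1 - z / d = ((s ^ M : ℝ) : ℂ) := by
    simp only [z, mul_div_cancel_left₀ _ hd0]
    push_cast
    ring
  have hzd : ‖z - d‖ = ρ * s ^ M := by
    rw [show z - d = -(d * ((s ^ M : ℝ) : ℂ)) by simp only [z]; push_cast; ring, norm_neg,
      norm_mul, hd, norm_real, Real.norm_of_nonneg hsM.1.le]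
  refine (hsum z ?_ ?_ ?_).congr fun k => ?_
  · rw [norm_mul, hd, norm_real, Real.norm_of_nonneg (by linarith)]
    nlinarith
  · intro h
    rw [h, sub_self, norm_zero] at hzd
    exact (mul_pos hρ hsM.1).ne hzd
  · calc ‖z - d‖ = ρ * s ^ M := hzd
      _ ≤ ρ * s := by gcongr; exact pow_le_of_le_one hs0.le hs1.le hM
      _ < ε := (lt_div_iff₀' hρ).1 hsε
  · rw [norm_mul, hz, exp_div_natCast_mul_log, ← ofReal_log (pow_nonneg hs0.le M), Real.log_pow,
      ofReal_mul, ofReal_natCast, mul_div_cancel_left₀ _ (Nat.cast_ne_zero.2 hM),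
      ← ofReal_exp, Real.exp_log hs0, norm_zpow, norm_real, Real.norm_of_nonneg hs0.le]

lemma extendsHolomorphicallyAt_of_puiseux (hρ : 0 < ρ) (hd : ‖d‖ = ρ) (hM : M ≠ 0)
    (hε : 0 < ε) (hsum : ∀ z : ℂ, ‖z‖ < ρ → z ≠ d → ‖z - d‖ < ε →
      (Summable fun k : ℤ => ‖c k * exp ((k : ℂ) / (M : ℂ) * log (1 - z / d))‖) ∧
      HasSum (fun k : ℤ => c k * exp ((k : ℂ) / (M : ℂ) * log (1 - z / d))) (f z))
    {y : ℂ} (hy : 0 < (1 - y / d).re ∧ ‖1 - y / d‖ < min 1 (ε / ρ) ^ M) :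
    ExtendsHolomorphicallyAt f ρ y := by
  have hd0 : d ≠ 0 := norm_pos_iff.1 (hd ▸ hρ)
  set R := min 1 (ε / ρ)
  have hR : 0 < R := lt_min one_pos (div_pos hε hρ)
  set W := (fun z => 1 - z / d) ⁻¹' {w | 0 < w.re ∧ ‖w‖ < R ^ M}
  have hW : IsOpen W := by
    refine ((isOpen_lt continuous_const continuous_re).inter
      (isOpen_lt continuous_norm continuous_const)).preimage ?_
    fun_prop
  refine ⟨W, hW, hy, fun z => puiseuxSum M c (1 - z / d), ?_, ?_⟩
  · exact (differentiableOn_puiseuxSum hM hR.le fun s hs =>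
      summable_norm_mul_zpow_of_puiseux hρ hd hM (fun z h₁ h₂ h₃ => (hsum z h₁ h₂ h₃).1) hs).comp
        (by fun_prop) (mapsTo_preimage _ _)
  rintro z ⟨hzW, hz⟩
  have hzd : z ≠ d := by
    rintro rfl
    have h0 : 0 < (1 - z / z).re := hzW.1
    simp [div_self hd0] at h0
  have hzε : ‖z - d‖ < ε := by
    calc ‖z - d‖ = ‖1 - z / d‖ * ρ := by rw [← hd, norm_one_sub_div_mul_norm z hd0]
      _ < R ^ M * ρ := by gcongr; exact hzW.2
      _ ≤ R * ρ := by gcongr; exact pow_le_of_le_one hR.le (min_le_left _ _) hM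
      _ ≤ ε / ρ * ρ := by gcongr; exact min_le_right _ _
      _ = ε := div_mul_cancel₀ ε hρ.ne'
  have hf := (hsum z (mem_ball_zero_iff.1 hz) hzd hzε).2
  simp only [exp_div_natCast_mul_log] at hf
  exact hf.tsum_eq

theorem ExtendsAsSingularPuiseuxAt.eventually_extendsHolomorphicallyAt
    (h : ExtendsAsSingularPuiseuxAt f ρ d) (hρ : 0 < ρ) (hd : ‖d‖ = ρ) :
    ∀ᶠ y in 𝓝[≠] d, ‖y‖ = ρ → ExtendsHolomorphicallyAt f ρ y := by
  obtain ⟨M, -, c, ε, hM, hε, -, -, -, hsum⟩ := h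
  have hd0 : d ≠ 0 := norm_pos_iff.1 (hd ▸ hρ)
  have hδ : 0 < min 1 (ε / ρ) ^ M * ρ := by positivity
  filter_upwards [self_mem_nhdsWithin, nhdsWithin_le_nhds (ball_mem_nhds d hδ)] with y hyd hy hyρ
  refine extendsHolomorphicallyAt_of_puiseux hρ hd (by lia) hε hsum ⟨?_, ?_⟩
  · have hre := re_lt_one_of_norm_eq_one (by rw [norm_div, hyρ, hd, div_self hρ.ne'])
      (fun h => hyd ((div_eq_one_iff_eq hd0).1 h))
    simpa using hre
  · rw [← mul_lt_mul_iff_left₀ (norm_pos_iff.2 hd0), norm_one_sub_div_mul_norm y hd0, hd]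
    exact mem_ball_iff_norm.1 hy

end PuiseuxPoint

theorem finite_setOf_not_extendsHolomorphicallyAt {g : ℂ → ℂ} {ρ : ℝ} (hρ : 0 < ρ)
    (hbd : ∀ d : ℂ, ‖d‖ = ρ →
      ExtendsHolomorphicallyAt g ρ d ∨ ExtendsAsSingularPuiseuxAt g ρ d) :
    {d : ℂ | ‖d‖ = ρ ∧ ¬ ExtendsHolomorphicallyAt g ρ d}.Finite := by
  have hcod : {d | ExtendsHolomorphicallyAt g ρ d} ∈ codiscreteWithin (sphere 0 ρ) := by
    refine mem_codiscreteWithin_iff_forall_mem_nhdsNE.2 fun x hx => ?_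
    rcases hbd x (mem_sphere_zero_iff_norm.1 hx) with hext | hpui
    · exact mem_nhdsWithin_of_mem_nhds (mem_of_superset
        ((isOpen_setOf_extendsHolomorphicallyAt g ρ).mem_nhds hext) subset_union_left)
    · filter_upwards [hpui.eventually_extendsHolomorphicallyAt hρ (mem_sphere_zero_iff_norm.1 hx)]
        with y hy
      by_cases hyρ : ‖y‖ = ρ
      · exact Or.inl (hy hyρ)
      · exact Or.inr fun h => hyρ (mem_sphere_zero_iff_norm.1 h)
  exact ((isCompact_sphere 0 ρ).finite_sdiff_of_mem_codiscreteWithin hcod).subset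
    fun d hd => ⟨mem_sphere_zero_iff_norm.2 hd.1, hd.2⟩

/-- **Lemma 3.6.** If the radius of convergence of `g` at `0` is exactly `ρ`, and at
every boundary point `g` either extends holomorphically or extends as a singular
convergent Puiseux series, then the set of boundary points at which `g` does not
extend holomorphically is finite and nonempty. -/
theorem voronoi_index_finite_positive
    (ρ : ℝ) (hρ : 0 < ρ) (g : ℂ → ℂ)
    (hg : DifferentiableOn ℂ g (Metric.ball (0 : ℂ) ρ))
    (hmax : ∀ ρ' > ρ, ¬ ∃ h : ℂ → ℂ, DifferentiableOn ℂ h (Metric.ball (0 : ℂ) ρ') ∧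
        ∀ z ∈ Metric.ball (0 : ℂ) ρ, h z = g z)
    (hbd : ∀ d : ℂ, ‖d‖ = ρ →
        ExtendsHolomorphicallyAt g ρ d ∨ ExtendsAsSingularPuiseuxAt g ρ d) :
    {d : ℂ | ‖d‖ = ρ ∧ ¬ ExtendsHolomorphicallyAt g ρ d}.Finite ∧
    {d : ℂ | ‖d‖ = ρ ∧ ¬ ExtendsHolomorphicallyAt g ρ d}.Nonempty := by
  refine ⟨finite_setOf_not_extendsHolomorphicallyAt hρ hbd, ?_⟩
  by_contra hempty
  have hall : ∀ d : ℂ, ‖d‖ = ρ → ExtendsHolomorphicallyAt g ρ d := fun d hd =>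
    by_contra fun hnot => hempty ⟨d, hd, hnot⟩
  obtain ⟨ρ', hρ', F, hF, hFg⟩ := exists_extension_of_forall_extendsHolomorphicallyAt hρ hg hall
  exact hmax ρ' hρ' ⟨F, hF, fun z hz => hFg hz⟩
end

section
/- Let k ≥ 2, ρ > 0, let c₁, …, c_k ∈ ℂ with |c_i| = ρ, let A = ⋃_{i=1}^k [0, c_i] be the union of the k radial segments, and let F ⊂ {x : |x| = ρ} be a finite set with d := dist(A, F) > 0. For ε > 0 let A_ε = { x ∈ D(0,ρ) : dist(x, A) < ε }. Then there exist constants C_A > 0 (depending only on A) and h > 0 such that for every sufficiently small ε > 0 there exist r > 0 and finitely many points x₁, …, x_s ∈ A_ε ∖ A satisfying: (1) A_ε ⊆ ⋃_{i=1}^s D(x_i, r); (2) the Lebesgue measure of ⋃_{i=1}^s D(x_i, r) is smaller than C_A·ε; (3) the union ⋃_{i=1}^s D(x_i, 2er + h) lies at distance at least d/2 from F. -/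
/-
Put an `ε`-spaced net of `⌈ρ/ε⌉ + 1` points on each segment `[0, c i]`, pulled towards `0` by the
factor `1 - ε/ρ` so that it stays `ε` inside the disk, and translate all net points by one small
vector `u`, `‖u‖ < ε`. Since `A` is Lebesgue-null, almost every such `u` moves all of the finitely
many points off `A`. Every point of `A_ε` is within `ε + 2ε + ε` of a translated point, so the
disks of radius `r = 4ε` cover `A_ε`; there are at most `3kρ/ε` of them, so their union has area
at most `48πkρε`. Finally each centre is within `ε` of `A`, so the enlarged disks stay within
`(8e + 1)ε + d/4 ≤ d/2` of `A` for `h = d/4` and small `ε`, hence at distance `≥ d/2` from `F`.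
-/

open Metric Set MeasureTheory

theorem addHaar_segment {E : Type*} [NormedAddCommGroup E] [NormedSpace ℝ E] [MeasurableSpace E]
    [BorelSpace E] [FiniteDimensional ℝ E] (μ : Measure E) [μ.IsAddHaarMeasure]
    (hE : 1 < Module.finrank ℝ E) (x y : E) : μ (segment ℝ x y) = 0 := by
  have hline : line[ℝ, x, y] ≠ ⊤ := fun h => by
    have hdir := congrArg AffineSubspace.direction h
    rw [direction_affineSpan, vectorSpan_pair, AffineSubspace.direction_top] at hdir
    exact (span_lt_top_of_card_lt_finrank (s := {x -ᵥ y}) (by simpa using hE)).ne hdir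
  refine measure_mono_null ?_ (Measure.addHaar_affineSubspace μ _ hline)
  rw [segment_eq_image_lineMap]
  rintro _ ⟨t, -, rfl⟩
  exact AffineMap.lineMap_mem_affineSpan_pair t x y

theorem exists_norm_lt_forall_add_notMem {E ι : Type*} [NormedAddCommGroup E] [MeasurableSpace E]
    [BorelSpace E] [Countable ι] (μ : Measure E) [μ.IsAddLeftInvariant] [μ.IsOpenPosMeasure]
    {A : Set E} (hA : μ A = 0) (g : ι → E) {δ : ℝ} (hδ : 0 < δ) :
    ∃ u, ‖u‖ < δ ∧ ∀ i, g i + u ∉ A := by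
  have hnull : μ (⋃ i, (g i + ·) ⁻¹' A) = 0 :=
    measure_iUnion_null fun i => (measure_preimage_add μ (g i) A).trans hA
  obtain ⟨u, hu, hgu⟩ :=
    not_subset.1 fun h => (measure_ball_pos μ 0 hδ).ne' (measure_mono_null h hnull)
  exact ⟨u, mem_ball_zero_iff.1 hu, fun i hi => hgu (mem_iUnion.2 ⟨i, hi⟩)⟩

section

variable {E : Type*} [NormedAddCommGroup E] [NormedSpace ℝ E]

theorem exists_dist_lineMap_le_of_mem_segment {a b y : E} (hy : y ∈ segment ℝ a b) {n : ℕ}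
    (hn : 0 < n) {δ : ℝ} (hab : dist a b ≤ n * δ) :
    ∃ j ≤ n, dist y (AffineMap.lineMap a b ((j : ℝ) / n)) ≤ δ := by
  rw [segment_eq_image_lineMap] at hy
  obtain ⟨θ, ⟨hθ0, hθ1⟩, rfl⟩ := hy
  have hn' : (0 : ℝ) < n := Nat.cast_pos.2 hn
  refine ⟨⌊θ * n⌋₊, Nat.floor_le_of_le (by nlinarith), ?_⟩
  have hfloor : |θ - ⌊θ * n⌋₊ / n| ≤ 1 / n := by
    have hj := Nat.floor_le (mul_nonneg hθ0 hn'.le)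
    have hj' := Nat.lt_floor_add_one (θ * n)
    rw [show θ - ⌊θ * n⌋₊ / n = (θ * n - ⌊θ * n⌋₊) / n by field_simp, abs_div,
      abs_of_pos hn', div_le_div_iff_of_pos_right hn', abs_le]
    constructor <;> linarith
  calc dist (AffineMap.lineMap a b θ) (AffineMap.lineMap a b ((⌊θ * n⌋₊ : ℝ) / n))
      = |θ - ⌊θ * n⌋₊ / n| * dist a b := by rw [dist_lineMap_lineMap, Real.dist_eq]
    _ ≤ 1 / n * (n * δ) := mul_le_mul hfloor hab dist_nonneg (by positivity)
    _ = δ := by field_simp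

theorem exists_net_segment_zero {c : E} {ρ ε : ℝ} (hc : ‖c‖ = ρ) (hε : 0 < ε) (hερ : ε ≤ ρ) :
    ∃ f : Fin (⌈ρ / ε⌉₊ + 1) → E, (∀ j, f j ∈ segment ℝ 0 c) ∧ (∀ j, ‖f j‖ ≤ ρ - ε) ∧
      ∀ a ∈ segment ℝ 0 c, ∃ j, dist a (f j) ≤ 2 * ε := by
  have hρ : 0 < ρ := hε.trans_le hερ
  set n := ⌈ρ / ε⌉₊
  have hn : 0 < n := Nat.ceil_pos.2 (div_pos hρ hε)
  set t := 1 - ε / ρ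
  have ht0 : 0 ≤ t := sub_nonneg.2 ((div_le_one hρ).2 hερ)
  have ht1 : t ≤ 1 := sub_le_self _ (div_pos hε hρ).le
  have hnorm : ∀ q ∈ segment ℝ 0 c, ‖q‖ ≤ ρ := fun q hq => by
    simpa using (convex_closedBall (0 : E) ρ).segment_subset (by simp [hρ.le]) (by simp [hc]) hq
  have hmem : ∀ j : Fin (n + 1), AffineMap.lineMap 0 c ((j : ℝ) / n) ∈ segment ℝ 0 c := fun j => by
    rw [segment_eq_image_lineMap]
    exact ⟨_, ⟨by positivity, div_le_one_of_le₀ (mod_cast j.is_le) (Nat.cast_nonneg n)⟩, rfl⟩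
  refine ⟨fun j => t • AffineMap.lineMap 0 c ((j : ℝ) / n), fun j =>
    ((convex_segment _ _).starConvex (left_mem_segment ℝ _ _)).smul_mem (hmem j) ht0 ht1,
    fun j => ?_, fun a ha => ?_⟩
  · calc ‖t • AffineMap.lineMap 0 c ((j : ℝ) / n)‖ = t * ‖AffineMap.lineMap 0 c ((j : ℝ) / n)‖ := by
          rw [norm_smul, Real.norm_of_nonneg ht0]
      _ ≤ t * ρ := mul_le_mul_of_nonneg_left (hnorm _ (hmem j)) ht0
      _ = ρ - ε := by rw [sub_mul, one_mul, div_mul_cancel₀ _ hρ.ne']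
  · obtain ⟨j, hj, hdist⟩ := exists_dist_lineMap_le_of_mem_segment ha hn (δ := ε)
      (by rw [dist_zero_left, hc]; exact (div_le_iff₀ hε).1 (Nat.le_ceil _))
    refine ⟨⟨j, Nat.lt_succ_of_le hj⟩, ?_⟩
    set q := AffineMap.lineMap (0 : E) c ((j : ℝ) / n)
    have hq : dist q (t • q) ≤ ε := by
      calc dist q (t • q) = ε / ρ * ‖q‖ := by
            rw [dist_eq_norm, show q - t • q = (ε / ρ) • q by simp only [t]; module, norm_smul,
              Real.norm_of_nonneg (by positivity)]
        _ ≤ ε / ρ * ρ := by gcongr; exact hnorm q (hmem ⟨j, Nat.lt_succ_of_le hj⟩)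
        _ = ε := div_mul_cancel₀ _ hρ.ne'
    linarith [dist_triangle a q (t • q)]

theorem exists_fin_net_iUnion_segment_zero {ι : Type*} [Fintype ι] {c : ι → E} {ρ ε : ℝ}
    (hc : ∀ i, ‖c i‖ = ρ) (hε : 0 < ε) (hερ : ε ≤ ρ) :
    ∃ (s : ℕ) (g : Fin s → E), (s : ℝ) ≤ 3 * Fintype.card ι * ρ / ε ∧
      (∀ j, g j ∈ ⋃ i, segment ℝ 0 (c i)) ∧ (∀ j, ‖g j‖ ≤ ρ - ε) ∧
      ∀ a ∈ ⋃ i, segment ℝ 0 (c i), ∃ j, dist a (g j) ≤ 2 * ε := by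
  set n := ⌈ρ / ε⌉₊
  choose f hf_mem hf_norm hf_net using fun i => exists_net_segment_zero (hc i) hε hερ
  have hcount : ((n : ℝ) + 1) * ε ≤ 3 * ρ := by
    have := mul_lt_mul_of_pos_right (Nat.ceil_lt_add_one (div_pos (hε.trans_le hερ) hε).le) hε
    rw [add_mul, div_mul_cancel₀ _ hε.ne', one_mul] at this
    linarith
  let e := Fintype.equivFin (ι × Fin (n + 1))
  refine ⟨_, fun j => f (e.symm j).1 (e.symm j).2, ?_, fun j => mem_iUnion.2 ⟨_, hf_mem _ _⟩,
    fun j => hf_norm _ _, fun a ha => ?_⟩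
  · rw [Fintype.card_prod, Fintype.card_fin, Nat.cast_mul, Nat.cast_succ, le_div_iff₀ hε, mul_assoc,
      mul_comm 3, mul_assoc]
    exact mul_le_mul_of_nonneg_left hcount (Nat.cast_nonneg _)
  · obtain ⟨i, ha⟩ := mem_iUnion.1 ha
    obtain ⟨j, hj⟩ := hf_net i a ha
    exact ⟨e (i, j), by simpa using hj⟩

theorem exists_ball_cover_thickening_iUnion_segment_zero {ι : Type*} [MeasurableSpace E]
    [BorelSpace E] (μ : Measure E) [μ.IsAddLeftInvariant] [μ.IsOpenPosMeasure] [Fintype ι]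
    [Nonempty ι] {c : ι → E} {ρ ε : ℝ} (hc : ∀ i, ‖c i‖ = ρ)
    {A : Set E} (hA : A = ⋃ i, segment ℝ 0 (c i)) (hA0 : μ A = 0) (hε : 0 < ε) (hερ : ε ≤ ρ) :
    ∃ (s : ℕ) (x : Fin s → E), (s : ℝ) ≤ 3 * Fintype.card ι * ρ / ε ∧
      (∀ j, x j ∈ {y ∈ ball (0 : E) ρ | infDist y A < ε} \ A) ∧
      {y ∈ ball (0 : E) ρ | infDist y A < ε} ⊆ ⋃ j, ball (x j) (4 * ε) := by
  subst hA
  obtain ⟨s, g, hs, hgA, hgρ, hnet⟩ := exists_fin_net_iUnion_segment_zero hc hε hερ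
  obtain ⟨u, hu, hguA⟩ := exists_norm_lt_forall_add_notMem μ hA0 g hε
  have hgu : ∀ j, dist (g j + u) (g j) < ε := fun j => by simpa using hu
  refine ⟨s, fun j => g j + u, hs, fun j => ⟨⟨?_, ?_⟩, hguA j⟩, ?_⟩
  · rw [mem_ball_zero_iff]
    linarith [norm_add_le (g j) u, hgρ j]
  · exact (infDist_le_dist_of_mem (hgA j)).trans_lt (hgu j)
  · rintro y ⟨-, hy⟩
    have hAne : (⋃ i, segment ℝ (0 : E) (c i)).Nonempty :=
      ⟨0, mem_iUnion.2 ⟨Classical.arbitrary ι, left_mem_segment ℝ _ _⟩⟩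
    obtain ⟨a, ha, hya⟩ := (infDist_lt_iff hAne).1 hy
    obtain ⟨j, hj⟩ := hnet a ha
    refine mem_iUnion.2 ⟨j, mem_ball.2 ?_⟩
    linarith [dist_triangle4 y a (g j) (g j + u), dist_comm (g j) (g j + u), hgu j]

end

theorem Complex.volume_iUnion_ball_le {ι : Type*} [Fintype ι] (x : ι → ℂ) {r : ℝ} (hr : 0 ≤ r) :
    volume (⋃ i, ball (x i) r) ≤ ENNReal.ofReal (Fintype.card ι * Real.pi * r ^ 2) := by
  refine (measure_iUnion_fintype_le _ _).trans_eq ?_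
  simp only [Complex.volume_ball, Finset.sum_const, Finset.card_univ, nsmul_eq_mul]
  rw [ENNReal.ofReal_mul (by positivity), ENNReal.ofReal_mul (by positivity), ENNReal.ofReal_pow hr,
    ENNReal.ofReal_natCast, ← NNReal.coe_real_pi, ENNReal.ofReal_coe_nnreal]
  ring

theorem voronoi_disk_covers_general
    (k : ℕ) (hk : 2 ≤ k) (ρ : ℝ) (hρ : 0 < ρ)
    (c : Fin k → ℂ) (hc : ∀ i, ‖c i‖ = ρ)
    (A : Set ℂ) (hA : A = ⋃ i, segment ℝ (0 : ℂ) (c i))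
    (F : Set ℂ)
    (dval : ℝ) (hdval : IsGLB {t : ℝ | ∃ a ∈ A, ∃ p ∈ F, t = dist a p} dval)
    (hdpos : 0 < dval) :
    ∃ C > 0, ∃ h > 0, ∃ ε₀ > 0, ∀ ε : ℝ, 0 < ε → ε ≤ ε₀ →
      ∃ r > 0, ∃ (s : ℕ) (x : Fin s → ℂ),
        (∀ i : Fin s, x i ∈ {y ∈ Metric.ball (0 : ℂ) ρ | Metric.infDist y A < ε} \ A) ∧
        {y ∈ Metric.ball (0 : ℂ) ρ | Metric.infDist y A < ε} ⊆ ⋃ i, Metric.ball (x i) r ∧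
        volume (⋃ i, Metric.ball (x i) r) < ENNReal.ofReal (C * ε) ∧
        ∀ y ∈ ⋃ i, Metric.ball (x i) (2 * Real.exp 1 * r + h), ∀ p ∈ F,
          dval / 2 ≤ dist y p := by
  have : Nonempty (Fin k) := ⟨⟨0, by omega⟩⟩
  have hAne : A.Nonempty := hA ▸ ⟨0, mem_iUnion.2 ⟨⟨0, by omega⟩, left_mem_segment ℝ _ _⟩⟩
  have hA0 : volume A = 0 :=
    hA ▸ measure_iUnion_null fun i => addHaar_segment volume (by simp) 0 (c i)
  refine ⟨64 * Real.pi * k * ρ, by positivity, dval / 4, by positivity,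
    min ρ (dval / (4 * (8 * Real.exp 1 + 1))), by positivity, fun ε hε hεε₀ => ?_⟩
  obtain ⟨s, x, hs, hxA, hcover⟩ := exists_ball_cover_thickening_iUnion_segment_zero volume hc hA
    hA0 hε (hεε₀.trans (min_le_left _ _))
  refine ⟨4 * ε, by positivity, s, x, hxA, hcover, ?_, ?_⟩
  · have hsε : s * ε ≤ 3 * k * ρ := by simpa using (le_div_iff₀ hε).1 hs
    refine (Complex.volume_iUnion_ball_le x (by positivity)).trans_lt
      ((ENNReal.ofReal_lt_ofReal_iff (by positivity)).2 ?_)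
    have : 0 < Real.pi * k * ρ * ε := by positivity
    calc Fintype.card (Fin s) * Real.pi * (4 * ε) ^ 2 = 16 * Real.pi * ε * (s * ε) := by simp; ring
      _ ≤ 16 * Real.pi * ε * (3 * k * ρ) := by gcongr
      _ < 64 * Real.pi * k * ρ * ε := by linarith
  · rintro y hy p hp
    obtain ⟨j, hyj⟩ := mem_iUnion.1 hy
    obtain ⟨a, ha, hxa⟩ := (infDist_lt_iff hAne).1 (hxA j).1.2
    have had : dval ≤ dist a p := hdval.1 ⟨a, ha, p, hp, rfl⟩
    have hεd : (8 * Real.exp 1 + 1) * ε ≤ dval / 4 := by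
      have := hεε₀.trans (min_le_right _ _)
      rw [le_div_iff₀ (by positivity)] at this
      linarith
    linarith [dist_triangle4 a (x j) y p, mem_ball'.1 hyj, dist_comm a (x j)]

/-- **Covering lemma (Lemma 5.7).** Let `A` be the union of `k ≥ 2` radial segments
`[0, c i]` with `|c i| = ρ`, and let `F` be a finite nonempty subset of the circle
`|x| = ρ` with `d := dist(A, F) > 0`. Then there are constants `C_A > 0` (depending
only on `A`) and `h > 0` such that for every sufficiently small `ε > 0` there exist
`r > 0` and finitely many points `x 1, …, x s ∈ A_ε ∖ A` with: (1) the disks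
`D(x i, r)` cover `A_ε`; (2) their union has Lebesgue measure smaller than `C_A·ε`;
(3) the union of the disks `D(x i, 2er + h)` lies at distance at least `d/2`
from `F`. -/
theorem voronoi_disk_covers
    (k : ℕ) (hk : 2 ≤ k) (ρ : ℝ) (hρ : 0 < ρ)
    (c : Fin k → ℂ) (hc : ∀ i, ‖c i‖ = ρ)
    (A : Set ℂ) (hA : A = ⋃ i, segment ℝ (0 : ℂ) (c i))
    (F : Set ℂ) (hF : F.Finite) (hFne : F.Nonempty)
    (hFsph : F ⊆ Metric.sphere (0 : ℂ) ρ)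
    (dval : ℝ) (hdval : IsGLB {t : ℝ | ∃ a ∈ A, ∃ p ∈ F, t = dist a p} dval)
    (hdpos : 0 < dval) :
    ∃ C > 0, ∃ h > 0, ∃ ε₀ > 0, ∀ ε : ℝ, 0 < ε → ε ≤ ε₀ →
      ∃ r > 0, ∃ (s : ℕ) (x : Fin s → ℂ),
        (∀ i : Fin s, x i ∈ {y ∈ Metric.ball (0 : ℂ) ρ | Metric.infDist y A < ε} \ A) ∧
        {y ∈ Metric.ball (0 : ℂ) ρ | Metric.infDist y A < ε} ⊆ ⋃ i, Metric.ball (x i) r ∧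
        volume (⋃ i, Metric.ball (x i) r) < ENNReal.ofReal (C * ε) ∧
        ∀ y ∈ ⋃ i, Metric.ball (x i) (2 * Real.exp 1 * r + h), ∀ p ∈ F,
          dval / 2 ≤ dist y p :=
  voronoi_disk_covers_general k hk ρ hρ c hc A hA F dval hdval hdpos
end

section
/- Let ℓ ≥ 1 be an integer, let P, Q be polynomials over ℂ, let U ⊆ ℂ be open, and let w : U → ℂ be analytic with P(z) ≠ 0, Q(z) ≠ 0 and w(z)^ℓ · Q(z) = P(z) for all z ∈ U. Define a sequence of polynomials V_n by V₀ = 1 and V_{n+1} = ℓ·P·Q·V_n′ − ((nℓ − 1)·P′·Q + (nℓ + 1)·P·Q′)·V_n. Then for every n ≥ 0 and every z ∈ U: (w⁽ⁿ⁾(z))^ℓ · ℓ^{nℓ} · P(z)^{nℓ} · Q(z)^{nℓ+1} = P(z) · (V_n(z))^ℓ, where w⁽ⁿ⁾ is the n-th derivative of w. Moreover, if P has degree d₁ and Q has degree d₂, then deg V_n ≤ n(d₁ + d₂ − 1) for every n. -/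
open Filter Topology Polynomial

/-!
Writing `R = ℓ·P·Q`, the curve relation `w^ℓ·Q = P` differentiates to the logarithmic-derivative
identity `R·w' = (P'·Q − P·Q')·w`. With it, differentiating `R^n·w⁽ⁿ⁾ = V_n·w` and multiplying
by `R` gives `R^(n+1)·w⁽ⁿ⁺¹⁾ = V_(n+1)·w`, which is exactly the recurrence for `V`. Raising this
linear identity to the `ℓ`-th power and using `w^ℓ·Q = P` once more gives the curve of `w⁽ⁿ⁾`.
Every term of the recurrence raises the degree by at most `deg P + deg Q − 1`.
-/

theorem natCast_mul_pow_sub_one_mul {M : Type*} [Semiring M] (n : ℕ) (a : M) :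
    (n : M) * a ^ (n - 1) * a = n * a ^ n := by
  rcases n with _ | n
  · simp
  · rw [mul_assoc, pow_sub_one_mul n.succ_ne_zero]

section Degree

variable {R : Type*} [CommRing R]

theorem natDegree_mul_derivative_le (p q : R[X]) :
    (p * q.derivative).natDegree ≤ p.natDegree + q.natDegree - 1 := by
  by_cases hq : q.natDegree = 0
  · simp [derivative_of_natDegree_zero hq]
  · have := natDegree_derivative_le q
    have := natDegree_mul_le (p := p) (q := q.derivative)
    omega

theorem natDegree_curve_recurrence_step_le (a b c : R) (P Q V : R[X]) :
    (C a * P * Q * V.derivative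
        - (C b * P.derivative * Q + C c * P * Q.derivative) * V).natDegree
      ≤ V.natDegree + (P.natDegree + Q.natDegree - 1) := by
  have hPQ := natDegree_mul_le (p := P) (q := Q)
  have hPQV := natDegree_mul_derivative_le (P * Q) V
  have hQP' := natDegree_mul_derivative_le Q P
  have hPQ' := natDegree_mul_derivative_le P Q
  have h₁ : (C a * P * Q * V.derivative).natDegree
      ≤ V.natDegree + (P.natDegree + Q.natDegree - 1) := by
    rw [show C a * P * Q * V.derivative = C a * (P * Q * V.derivative) by ring]
    have := natDegree_C_mul_le a (P * Q * V.derivative)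
    omega
  have h₂ : (C b * P.derivative * Q + C c * P * Q.derivative).natDegree
      ≤ P.natDegree + Q.natDegree - 1 := by
    rw [show C b * P.derivative * Q + C c * P * Q.derivative
      = C b * (Q * P.derivative) + C c * (P * Q.derivative) by ring]
    have := natDegree_C_mul_le b (Q * P.derivative)
    have := natDegree_C_mul_le c (P * Q.derivative)
    have := natDegree_add_le (C b * (Q * P.derivative)) (C c * (P * Q.derivative))
    omega
  have h₃ := natDegree_mul_le (p := C b * P.derivative * Q + C c * P * Q.derivative) (q := V)
  have h₄ := natDegree_sub_le (C a * P * Q * V.derivative)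
    ((C b * P.derivative * Q + C c * P * Q.derivative) * V)
  omega

end Degree

theorem mul_deriv_eq_of_pow_mul_eval_eq {ℓ : ℕ} {P Q : ℂ[X]} {w : ℂ → ℂ} {z : ℂ}
    (hw : DifferentiableAt ℂ w z) (h : ∀ᶠ y in 𝓝 z, w y ^ ℓ * Q.eval y = P.eval y) :
    ℓ * P.eval z * Q.eval z * deriv w z
      = (P.derivative.eval z * Q.eval z - P.eval z * Q.derivative.eval z) * w z := by
  have hderiv := (((hw.hasDerivAt.fun_pow ℓ).mul (Q.hasDerivAt z)).congr_of_eventuallyEq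
    (h.mono fun _ hy => hy.symm)).unique (P.hasDerivAt z)
  have hcurve := h.self_of_nhds
  have hpow := natCast_mul_pow_sub_one_mul ℓ (w z)
  linear_combination Q.eval z * w z * hderiv - deriv w z * Q.eval z ^ 2 * hpow
    - (ℓ * Q.eval z * deriv w z + Q.derivative.eval z * w z) * hcurve

theorem pow_mul_iteratedDeriv_eq {ℓ : ℕ} {P Q : ℂ[X]} {U : Set ℂ} {w : ℂ → ℂ}
    {V : ℕ → ℂ[X]} (hU : IsOpen U) (hw : DifferentiableOn ℂ w U)
    (hcurve : ∀ z ∈ U, w z ^ ℓ * Q.eval z = P.eval z) (hV0 : V 0 = 1)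
    (hVs : ∀ n : ℕ, V (n + 1) =
        C (ℓ : ℂ) * P * Q * (V n).derivative
          - (C (((n * ℓ : ℕ) : ℂ) - 1) * P.derivative * Q
              + C (((n * ℓ : ℕ) : ℂ) + 1) * P * Q.derivative) * V n) (n : ℕ) :
    ∀ z ∈ U, (ℓ * P.eval z * Q.eval z) ^ n * iteratedDeriv n w z = (V n).eval z * w z := by
  induction n with
  | zero => simp [hV0]
  | succ n ih =>
    intro z hz
    have hUz : U ∈ 𝓝 z := hU.mem_nhds hz
    have hwz : DifferentiableAt ℂ w z := hw.differentiableAt hUz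
    have hD : HasDerivAt (iteratedDeriv n w) (iteratedDeriv (n + 1) w z) z := by
      rw [iteratedDeriv_succ, iteratedDeriv_eq_iterate]
      exact ((hw.analyticOnNhd hU).iterated_deriv n z hz).differentiableAt.hasDerivAt
    have hR : HasDerivAt (fun y => ℓ * P.eval y * Q.eval y)
        (ℓ * P.derivative.eval z * Q.eval z + ℓ * P.eval z * Q.derivative.eval z) z :=
      ((P.hasDerivAt z).const_mul (ℓ : ℂ)).mul (Q.hasDerivAt z)
    have hderiv := (((hR.fun_pow n).mul hD).congr_of_eventuallyEq
      (eventually_of_mem hUz fun y hy => (ih y hy).symm)).unique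
        (((V n).hasDerivAt z).mul hwz.hasDerivAt)
    have hlog := mul_deriv_eq_of_pow_mul_eval_eq hwz (eventually_of_mem hUz hcurve)
    have hpow := natCast_mul_pow_sub_one_mul n (ℓ * P.eval z * Q.eval z)
    rw [hVs n]
    simp only [eval_sub, eval_mul, eval_add, eval_C]
    push_cast
    linear_combination ℓ * P.eval z * Q.eval z * hderiv
      - (ℓ * P.derivative.eval z * Q.eval z + ℓ * P.eval z * Q.derivative.eval z)
        * iteratedDeriv n w z * hpow
      - n * (ℓ * P.derivative.eval z * Q.eval z + ℓ * P.eval z * Q.derivative.eval z) * ih z hz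
      + (V n).eval z * hlog

theorem derivative_curve_recurrence_general
    (ℓ : ℕ) (P Q : Polynomial ℂ)
    (U : Set ℂ) (hU : IsOpen U) (w : ℂ → ℂ)
    (hw : DifferentiableOn ℂ w U)
    (hPQ : ∀ z ∈ U, P.eval z ≠ 0 ∧ Q.eval z ≠ 0 ∧ w z ^ ℓ * Q.eval z = P.eval z)
    (V : ℕ → Polynomial ℂ) (hV0 : V 0 = 1)
    (hVs : ∀ n : ℕ, V (n + 1) =
        Polynomial.C (ℓ : ℂ) * P * Q * (V n).derivative
          - (Polynomial.C (((n * ℓ : ℕ) : ℂ) - 1) * P.derivative * Q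
              + Polynomial.C (((n * ℓ : ℕ) : ℂ) + 1) * P * Q.derivative) * V n) :
    (∀ n : ℕ, ∀ z ∈ U,
        (iteratedDeriv n w z) ^ ℓ * (ℓ : ℂ) ^ (n * ℓ) * P.eval z ^ (n * ℓ)
            * Q.eval z ^ (n * ℓ + 1)
          = P.eval z * ((V n).eval z) ^ ℓ)
    ∧ ∀ n : ℕ, (V n).natDegree ≤ n * (P.natDegree + Q.natDegree - 1) := by
  have hcurve : ∀ z ∈ U, w z ^ ℓ * Q.eval z = P.eval z := fun z hz => (hPQ z hz).2.2
  refine ⟨fun n z hz => ?_, fun n => ?_⟩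
  · have hlin : ((ℓ * P.eval z * Q.eval z) ^ n * iteratedDeriv n w z) ^ ℓ
        = ((V n).eval z * w z) ^ ℓ := by
      rw [pow_mul_iteratedDeriv_eq hU hw hcurve hV0 hVs n z hz]
    linear_combination Q.eval z * hlin + (V n).eval z ^ ℓ * hcurve z hz
  · induction n with
    | zero => simp [hV0]
    | succ n ih =>
      rw [hVs n, Nat.succ_mul]
      exact (natDegree_curve_recurrence_step_le _ _ _ P Q (V n)).trans (by omega)

/-- **Lemma 6.7 (derivative curves of `w^ℓ = P/Q`).** If `w` is an analytic branch
of the algebraic function `w^ℓ·Q = P` on an open set `U`, and `V n` are the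
polynomials given by `V 0 = 1` and
`V (n+1) = ℓ·P·Q·V n′ − ((nℓ−1)·P′·Q + (nℓ+1)·P·Q′)·V n`, then
`(w⁽ⁿ⁾)^ℓ · ℓ^{nℓ} · P^{nℓ} · Q^{nℓ+1} = P · (V n)^ℓ` on `U`; moreover
`deg (V n) ≤ n(deg P + deg Q − 1)`. -/
theorem derivative_curve_recurrence
    (ℓ : ℕ) (hℓ : 1 ≤ ℓ) (P Q : Polynomial ℂ)
    (U : Set ℂ) (hU : IsOpen U) (w : ℂ → ℂ)
    (hw : DifferentiableOn ℂ w U)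
    (hPQ : ∀ z ∈ U, P.eval z ≠ 0 ∧ Q.eval z ≠ 0 ∧ w z ^ ℓ * Q.eval z = P.eval z)
    (V : ℕ → Polynomial ℂ) (hV0 : V 0 = 1)
    (hVs : ∀ n : ℕ, V (n + 1) =
        Polynomial.C (ℓ : ℂ) * P * Q * (V n).derivative
          - (Polynomial.C (((n * ℓ : ℕ) : ℂ) - 1) * P.derivative * Q
              + Polynomial.C (((n * ℓ : ℕ) : ℂ) + 1) * P * Q.derivative) * V n) :
    (∀ n : ℕ, ∀ z ∈ U,
        (iteratedDeriv n w z) ^ ℓ * (ℓ : ℂ) ^ (n * ℓ) * P.eval z ^ (n * ℓ)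
            * Q.eval z ^ (n * ℓ + 1)
          = P.eval z * ((V n).eval z) ^ ℓ)
    ∧ ∀ n : ℕ, (V n).natDegree ≤ n * (P.natDegree + Q.natDegree - 1) :=
  derivative_curve_recurrence_general ℓ P Q U hU w hw hPQ V hV0 hVs
end

section
/- Let U ⊆ ℂ be open with z² ≠ 1 for all z ∈ U, and let w : U → ℂ be analytic with w(z)² = 1 − z² on U. Define a sequence of polynomials U_n by U₁(X) = X and U_n = (2n − 3)·X·U_{n−1} + (1 − X²)·U_{n−1}′ for n ≥ 2. Then for every n ≥ 1 and every z ∈ U: (w⁽ⁿ⁾(z))² · (z² − 1)^{2n−1} = −(U_n(z))², where w⁽ⁿ⁾ is the n-th derivative of w. -/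
/-!
Differentiating `w² = 1 - z²` gives `w' = -z w / (1 - z²)`. Differentiating `P(z) w / (1 - z²)ⁿ`
with this rule gives `((2n - 1) z P + (1 - z²) P') w / (1 - z²)ⁿ⁺¹`, which is the recurrence
defining `U_n`; hence `w⁽ⁿ⁾ = -U_n(z) w / (1 - z²)ⁿ`. Squaring and substituting `w² = 1 - z²`
once more leaves `-U_n(z)² / (1 - z²)^{2n-1}`.
-/

open Filter Topology Polynomial

variable {𝕜 : Type*} [NontriviallyNormedField 𝕜]

theorem hasDerivAt_of_sq_eq [NeZero (2 : 𝕜)] {w f : 𝕜 → 𝕜} {f' z : 𝕜}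
    (hw : DifferentiableAt 𝕜 w z) (hf : HasDerivAt f f' z) (hsq : ∀ᶠ x in 𝓝 z, w x ^ 2 = f x)
    (hz : w z ≠ 0) : HasDerivAt w (f' / (2 * w z)) z := by
  have hsq' : HasDerivAt f (2 * w z * deriv w z) z := by
    simpa using (hw.hasDerivAt.fun_pow 2).congr_of_eventuallyEq (hsq.mono fun _ h => h.symm)
  rw [hf.unique hsq', mul_div_cancel_left₀ _ (mul_ne_zero two_ne_zero hz)]
  exact hw.hasDerivAt

theorem hasDerivAt_of_sq_eq_one_sub_sq [NeZero (2 : 𝕜)] {w : 𝕜 → 𝕜} {z : 𝕜}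
    (hw : DifferentiableAt 𝕜 w z) (hsq : ∀ᶠ x in 𝓝 z, w x ^ 2 = 1 - x ^ 2) (hz : 1 - z ^ 2 ≠ 0) :
    HasDerivAt w (-z * w z / (1 - z ^ 2)) z := by
  have hwz : w z ^ 2 = 1 - z ^ 2 := hsq.self_of_nhds
  have hw0 : w z ≠ 0 := fun h => hz (by rw [← hwz, h]; ring)
  convert hasDerivAt_of_sq_eq hw ((hasDerivAt_pow 2 z).const_sub 1) hsq hw0 using 1
  rw [← hwz]
  field_simp
  ring

theorem hasDerivAt_eval_mul_div_one_sub_sq_pow {w : 𝕜 → 𝕜} {z : 𝕜}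
    (hw : HasDerivAt w (-z * w z / (1 - z ^ 2)) z) (hz : 1 - z ^ 2 ≠ 0) (P : 𝕜[X]) (n : ℕ) :
    HasDerivAt (fun x => P.eval x * w x / (1 - x ^ 2) ^ n)
      ((C (2 * n - 1 : 𝕜) * X * P + (1 - X ^ 2) * derivative P).eval z * w z
        / (1 - z ^ 2) ^ (n + 1)) z := by
  have hden := ((hasDerivAt_pow 2 z).const_sub 1).fun_pow n
  refine (((P.hasDerivAt z).fun_mul hw).fun_div hden (pow_ne_zero n hz)).congr_deriv ?_
  simp only [eval_add, eval_mul, eval_C, eval_X, eval_sub, eval_one, eval_pow]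
  rcases n with _ | n
  · field_simp
    ring
  · simp only [Nat.add_sub_cancel]
    push_cast
    field_simp
    ring

section OpenSet

variable {U : Set 𝕜} {w : 𝕜 → 𝕜}

theorem iteratedDeriv_succ_eq_eval_mul_div (hU : IsOpen U) (hU1 : ∀ z ∈ U, 1 - z ^ 2 ≠ 0)
    (hw : ∀ z ∈ U, HasDerivAt w (-z * w z / (1 - z ^ 2)) z) {P : 𝕜[X]} {n : ℕ}
    (hP : ∀ z ∈ U, iteratedDeriv n w z = P.eval z * w z / (1 - z ^ 2) ^ n) :
    ∀ z ∈ U, iteratedDeriv (n + 1) w z =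
      (C (2 * n - 1 : 𝕜) * X * P + (1 - X ^ 2) * derivative P).eval z * w z
        / (1 - z ^ 2) ^ (n + 1) := by
  intro z hz
  have hP' : iteratedDeriv n w =ᶠ[𝓝 z] fun x => P.eval x * w x / (1 - x ^ 2) ^ n :=
    eventually_of_mem (hU.mem_nhds hz) hP
  rw [iteratedDeriv_succ, hP'.deriv_eq,
    (hasDerivAt_eval_mul_div_one_sub_sq_pow (hw z hz) (hU1 z hz) P n).deriv]

theorem iteratedDeriv_eq_neg_eval_mul_div (hU : IsOpen U) (hU1 : ∀ z ∈ U, 1 - z ^ 2 ≠ 0)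
    (hw : ∀ z ∈ U, HasDerivAt w (-z * w z / (1 - z ^ 2)) z)
    (V : ℕ → 𝕜[X]) (hV1 : V 1 = X)
    (hVrec : ∀ n : ℕ, 2 ≤ n → V n =
      C ((2 * (n : ℤ) - 3 : ℤ) : 𝕜) * X * V (n - 1) + (1 - X ^ 2) * (V (n - 1)).derivative) :
    ∀ n : ℕ, 1 ≤ n → ∀ z ∈ U,
      iteratedDeriv n w z = -(V n).eval z * w z / (1 - z ^ 2) ^ n := by
  intro n hn
  induction n, hn using Nat.le_induction with
  | base =>
    intro z hz
    simp [iteratedDeriv_one, (hw z hz).deriv, hV1]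
  | succ n hn ih =>
    have hstep :
        C (2 * n - 1 : 𝕜) * X * -V n + (1 - X ^ 2) * derivative (-V n) = -V (n + 1) := by
      have hcoeff : ((2 * ((n + 1 : ℕ) : ℤ) - 3 : ℤ) : 𝕜) = 2 * n - 1 := by push_cast; ring
      rw [hVrec (n + 1) (by omega), hcoeff, Nat.add_sub_cancel, derivative_neg]
      ring
    simp_rw [← eval_neg] at ih ⊢
    rw [← hstep]
    exact iteratedDeriv_succ_eq_eval_mul_div hU hU1 hw ih

end OpenSet

theorem sq_neg_mul_div_pow_mul_neg_pow {K : Type*} [Field K] {a b c : K} (hb : b ^ 2 = c)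
    (hc : c ≠ 0) {n : ℕ} (hn : 1 ≤ n) : (-a * b / c ^ n) ^ 2 * (-c) ^ (2 * n - 1) = -a ^ 2 := by
  obtain ⟨m, rfl⟩ := Nat.exists_eq_add_of_le' hn
  rw [show 2 * (m + 1) - 1 = 2 * m + 1 by omega, Odd.neg_pow ⟨m, rfl⟩, div_pow, mul_pow, hb]
  field_simp
  ring

/-- **Corollary 6.10 (derivative curves of the unit circle `z² + w² = 1`).** If `w`
is an analytic branch of `w² = 1 − z²` on an open set `U` avoiding `z² = 1`, and
`U n` are the polynomials given by `U 1 = X` and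
`U n = (2n−3)·X·U (n−1) + (1 − X²)·U (n−1)′` for `n ≥ 2`, then for all `n ≥ 1`
and `z ∈ U`: `(w⁽ⁿ⁾(z))² · (z² − 1)^{2n−1} = −(U n (z))²`. -/
theorem circle_derivative_curve
    (U : Set ℂ) (hUopen : IsOpen U) (hU1 : ∀ z ∈ U, z ^ 2 ≠ 1)
    (w : ℂ → ℂ) (hw : DifferentiableOn ℂ w U)
    (hww : ∀ z ∈ U, w z ^ 2 = 1 - z ^ 2)
    (V : ℕ → Polynomial ℂ) (hV1 : V 1 = Polynomial.X)
    (hVrec : ∀ n : ℕ, 2 ≤ n → V n =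
        Polynomial.C ((2 * (n : ℤ) - 3 : ℤ) : ℂ) * Polynomial.X * V (n - 1)
          + (1 - Polynomial.X ^ 2) * (V (n - 1)).derivative) :
    ∀ n : ℕ, 1 ≤ n → ∀ z ∈ U,
      (iteratedDeriv n w z) ^ 2 * (z ^ 2 - 1) ^ (2 * n - 1)
        = -(((V n).eval z) ^ 2) := by
  have hU1' : ∀ z ∈ U, 1 - z ^ 2 ≠ 0 := fun z hz h => hU1 z hz (by linear_combination -h)
  have hderiv : ∀ z ∈ U, HasDerivAt w (-z * w z / (1 - z ^ 2)) z := fun z hz =>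
    hasDerivAt_of_sq_eq_one_sub_sq (hw.differentiableAt (hUopen.mem_nhds hz))
      (eventually_of_mem (hUopen.mem_nhds hz) hww) (hU1' z hz)
  intro n hn z hz
  rw [iteratedDeriv_eq_neg_eval_mul_div hUopen hU1' hderiv V hV1 hVrec n hn z hz,
    ← neg_sub 1 (z ^ 2)]
  exact sq_neg_mul_div_pow_mul_neg_pow (hww z hz) (hU1' z hz) hn
end

section
/- Let f : ℂ ∖ {i, −i} → ℂ be f(z) = 2i/(z² + 1). Then for every n ∈ ℕ and every z ∈ ℂ ∖ {i, −i}: f⁽ⁿ⁾(z) = (−1)ⁿ·n!·( (z − i)^{−(n+1)} − (z + i)^{−(n+1)} ). Moreover, for every n ∈ ℕ the zero set of f⁽ⁿ⁾ in ℂ ∖ {i, −i} equals { tan θ : θ ∈ (−π/2, π/2), exp(2i(n+1)θ) = (−1)^{n+1} }; in particular it consists of exactly n distinct real numbers (explicitly, θ runs over the multiples of π/(n+1) in (−π/2, π/2) when n is odd, and over π/(2n+2) + jπ/(n+1), j ∈ ℤ, lying in (−π/2, π/2) when n is even). -/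
/-!
Partial fractions give `2i/(z² + 1) = (z - i)⁻¹ - (z + i)⁻¹` away from `±i`, whence the formula
for the derivatives, and `f⁽ⁿ⁾(z) = 0` becomes `(z + i)ⁿ⁺¹ = (z - i)ⁿ⁺¹`. Such a `z` is
equidistant from `±i`, hence real, so `z = tan θ` with `θ ∈ (-π/2, π/2)`; then
`(z + i)/(z - i) = -e^{-2iθ}`, which turns the equation into `e^{2i(n+1)θ} = (-1)ⁿ⁺¹`.
Counting: `z ↦ (z + i)/(z - i)` maps the zeros bijectively onto the `n` nontrivial
`(n+1)`-st roots of unity.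
-/

open Complex Set Topology

theorem prod_range_neg_one_sub {R : Type*} [CommRing R] (n : ℕ) :
    ∏ i ∈ Finset.range n, ((-1 : R) - i) = (-1) ^ n * n.factorial := by
  induction n with
  | zero => simp
  | succ n ih =>
    rw [Finset.prod_range_succ, ih, Nat.factorial_succ]
    push_cast
    ring

theorem iteratedDeriv_inv_sub {𝕜 : Type*} [NontriviallyNormedField 𝕜] (n : ℕ) (a x : 𝕜) :
    iteratedDeriv n (fun z ↦ (z - a)⁻¹) x = (-1) ^ n * n.factorial * (x - a) ^ (-(n + 1 : ℤ)) := by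
  simp only [← zpow_neg_one, iteratedDeriv_comp_sub_const n (fun y : 𝕜 ↦ y ^ (-1 : ℤ)), iteratedDeriv_eq_iterate,
    iter_deriv_zpow, Int.cast_neg, Int.cast_one, prod_range_neg_one_sub]
  ring_nf

theorem two_mul_I_div_sq_add_one (z : ℂ) (h₁ : z ≠ I) (h₂ : z ≠ -I) :
    2 * I / (z ^ 2 + 1) = (z - I)⁻¹ - (z + I)⁻¹ := by
  have hsub : z - I ≠ 0 := sub_ne_zero.mpr h₁
  have hadd : z + I ≠ 0 := by rwa [← sub_neg_eq_add, sub_ne_zero]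
  rw [show z ^ 2 + 1 = (z - I) * (z + I) by linear_combination I_sq]
  field_simp
  ring

theorem iteratedDeriv_two_mul_I_div_sq_add_one (n : ℕ) (z : ℂ) (h₁ : z ≠ I) (h₂ : z ≠ -I) :
    iteratedDeriv n (fun w ↦ 2 * I / (w ^ 2 + 1)) z =
      (-1) ^ n * n.factorial * ((z - I) ^ (-(n + 1 : ℤ)) - (z + I) ^ (-(n + 1 : ℤ))) := by
  have hnhds : {I, -I}ᶜ ∈ 𝓝 z :=
    (Set.toFinite _).isClosed.isOpen_compl.mem_nhds (by simp [h₁, h₂])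
  have hpf : (fun w ↦ 2 * I / (w ^ 2 + 1)) =ᶠ[𝓝 z] fun w ↦ (w - I)⁻¹ - (w - -I)⁻¹ := by
    filter_upwards [hnhds] with w hw
    simp only [Set.mem_compl_iff, Set.mem_insert_iff, Set.mem_singleton_iff, not_or] at hw
    rw [sub_neg_eq_add]
    exact two_mul_I_div_sq_add_one w hw.1 hw.2
  rw [hpf.iteratedDeriv_eq, iteratedDeriv_fun_sub, iteratedDeriv_inv_sub, iteratedDeriv_inv_sub,
    sub_neg_eq_add, mul_sub]
  · exact (contDiffAt_id.sub contDiffAt_const).inv (sub_ne_zero.mpr h₁)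
  · exact (contDiffAt_id.sub contDiffAt_const).inv (sub_ne_zero.mpr h₂)

theorem iteratedDeriv_two_mul_I_div_sq_add_one_eq_zero_iff (n : ℕ) {z : ℂ} (h₁ : z ≠ I)
    (h₂ : z ≠ -I) :
    iteratedDeriv n (fun w ↦ 2 * I / (w ^ 2 + 1)) z = 0 ↔ (z + I) ^ (n + 1) = (z - I) ^ (n + 1) := by
  have hc : (-1 : ℂ) ^ n * n.factorial ≠ 0 := by simp [Nat.factorial_ne_zero]
  rw [iteratedDeriv_two_mul_I_div_sq_add_one n z h₁ h₂, mul_eq_zero, or_iff_right hc, sub_eq_zero,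
    show -(n + 1 : ℤ) = -((n + 1 : ℕ) : ℤ) by push_cast; ring, zpow_neg, zpow_neg, zpow_natCast,
    zpow_natCast, inv_inj, eq_comm]

theorem im_eq_zero_of_add_I_pow_eq_sub_I_pow {m : ℕ} (hm : m ≠ 0) {z : ℂ}
    (h : (z + I) ^ m = (z - I) ^ m) : z.im = 0 := by
  have hsq : normSq (z + I) = normSq (z - I) :=
    (pow_left_inj₀ (normSq_nonneg _) (normSq_nonneg _) hm).mp (by rw [← map_pow, ← map_pow, h])
  simp only [normSq_apply, add_re, add_im, sub_re, sub_im, I_re, I_im] at hsq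
  linarith

theorem setOf_iteratedDeriv_two_mul_I_div_sq_add_one_eq_zero (n : ℕ) :
    {z : ℂ | (z ≠ I ∧ z ≠ -I) ∧ iteratedDeriv n (fun w ↦ 2 * I / (w ^ 2 + 1)) z = 0} =
      {z : ℂ | (z + I) ^ (n + 1) = (z - I) ^ (n + 1)} := by
  ext z
  constructor
  · rintro ⟨⟨h₁, h₂⟩, h⟩
    exact (iteratedDeriv_two_mul_I_div_sq_add_one_eq_zero_iff n h₁ h₂).mp h
  · intro (h : (z + I) ^ (n + 1) = (z - I) ^ (n + 1))
    have him := im_eq_zero_of_add_I_pow_eq_sub_I_pow n.add_one_ne_zero h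
    have h₁ : z ≠ I := fun hz ↦ by simp [hz] at him
    have h₂ : z ≠ -I := fun hz ↦ by simp [hz] at him
    exact ⟨⟨h₁, h₂⟩, (iteratedDeriv_two_mul_I_div_sq_add_one_eq_zero_iff n h₁ h₂).mpr h⟩

theorem ofReal_tan_add_I {θ : ℝ} (hθ : Real.cos θ ≠ 0) :
    (Real.tan θ : ℂ) + I = I * exp (-θ * I) / Real.cos θ := by
  have hc : Complex.cos θ ≠ 0 := by exact_mod_cast hθ
  rw [Real.tan_eq_sin_div_cos, exp_mul_I, cos_neg, sin_neg]
  push_cast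
  field_simp
  linear_combination (Complex.sin θ) * I_sq

theorem ofReal_tan_sub_I {θ : ℝ} (hθ : Real.cos θ ≠ 0) :
    (Real.tan θ : ℂ) - I = -I * exp (θ * I) / Real.cos θ := by
  have hc : Complex.cos θ ≠ 0 := by exact_mod_cast hθ
  rw [Real.tan_eq_sin_div_cos, exp_mul_I]
  push_cast
  field_simp
  linear_combination (Complex.sin θ) * I_sq

theorem ofReal_tan_add_I_pow_eq_iff {θ : ℝ} (hθ : Real.cos θ ≠ 0) (m : ℕ) :
    ((Real.tan θ : ℂ) + I) ^ m = ((Real.tan θ : ℂ) - I) ^ m ↔ exp (2 * I * m * θ) = (-1) ^ m := by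
  set u : ℂ := I * exp (-θ * I) / Real.cos θ
  have hu : u ≠ 0 := div_ne_zero (mul_ne_zero I_ne_zero (exp_ne_zero _)) (ofReal_ne_zero.mpr hθ)
  have hsub : (Real.tan θ : ℂ) - I = u * -exp (2 * θ * I) := by
    rw [ofReal_tan_sub_I hθ, show (2 * θ * I : ℂ) = θ * I + θ * I by ring, exp_add]
    simp only [u, neg_mul, exp_neg]
    field_simp
  have hsq : ((-1 : ℂ) ^ m) ^ 2 = 1 := by rw [← pow_mul, mul_comm, pow_mul]; simp
  rw [ofReal_tan_add_I hθ, hsub, mul_pow, eq_comm, mul_eq_left₀ (pow_ne_zero _ hu), neg_pow,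
    ← exp_nat_mul, show (m : ℂ) * (2 * θ * I) = 2 * I * m * θ by ring]
  constructor <;> intro h
  · linear_combination (-1 : ℂ) ^ m * h - exp (2 * I * m * θ) * hsq
  · linear_combination (-1 : ℂ) ^ m * h + hsq

theorem setOf_add_I_pow_eq_sub_I_pow {m : ℕ} (hm : m ≠ 0) :
    {z : ℂ | (z + I) ^ m = (z - I) ^ m} =
      {z : ℂ | ∃ θ : ℝ, -(Real.pi / 2) < θ ∧ θ < Real.pi / 2 ∧
        exp (2 * I * m * θ) = (-1) ^ m ∧ z = Real.tan θ} := by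
  ext z
  constructor
  · intro (h : (z + I) ^ m = (z - I) ^ m)
    have hz : z = Real.tan (Real.arctan z.re) := by
      rw [Real.tan_arctan]
      exact Complex.ext rfl (by simpa using im_eq_zero_of_add_I_pow_eq_sub_I_pow hm h)
    have hcos : Real.cos (Real.arctan z.re) ≠ 0 := (Real.cos_arctan_pos _).ne'
    refine ⟨_, Real.neg_pi_div_two_lt_arctan _, Real.arctan_lt_pi_div_two _, ?_, hz⟩
    rw [← ofReal_tan_add_I_pow_eq_iff hcos, ← hz]
    exact h
  · rintro ⟨θ, hθ₁, hθ₂, hexp, rfl⟩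
    exact (ofReal_tan_add_I_pow_eq_iff (Real.cos_pos_of_mem_Ioo ⟨hθ₁, hθ₂⟩).ne' m).mpr hexp

theorem ncard_setOf_add_I_pow_eq_sub_I_pow {m : ℕ} (hm : m ≠ 0) :
    {z : ℂ | (z + I) ^ m = (z - I) ^ m}.ncard = m - 1 := by
  set T : Set ℂ := ↑(Polynomial.nthRootsFinset m (1 : ℂ) \ {1})
  have hT : ∀ w, w ∈ T ↔ w ^ m = 1 ∧ w ≠ 1 := by
    simp [T, Polynomial.mem_nthRootsFinset (Nat.pos_of_ne_zero hm)]
  -- `w ↦ I (w + 1) / (w - 1)` inverts the Cayley map `z ↦ (z + I) / (z - I)`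
  set ψ : ℂ → ℂ := fun w ↦ I * (w + 1) / (w - 1)
  have hψ_sub : ∀ w ≠ 1, ψ w - I = 2 * I / (w - 1) := fun w hw ↦ by
    have : w - 1 ≠ 0 := sub_ne_zero.mpr hw
    simp only [ψ]; field_simp; ring
  have hψ_add : ∀ w ≠ 1, ψ w + I = 2 * I * w / (w - 1) := fun w hw ↦ by
    have : w - 1 ≠ 0 := sub_ne_zero.mpr hw
    simp only [ψ]; field_simp; ring
  have himage : {z : ℂ | (z + I) ^ m = (z - I) ^ m} = ψ '' T := by
    ext z
    constructor
    · intro (h : (z + I) ^ m = (z - I) ^ m)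
      have hz : z - I ≠ 0 := by
        intro hz
        rw [hz, zero_pow hm, sub_eq_zero.mp hz] at h
        simp [hm] at h
      refine ⟨(z + I) / (z - I), (hT _).mpr ⟨?_, ?_⟩, ?_⟩
      · rw [div_pow, h, div_self (pow_ne_zero _ hz)]
      · rw [Ne, div_eq_one_iff_eq hz]
        intro h'
        simp [sub_eq_add_neg, self_eq_neg] at h'
      · simp only [ψ]
        field_simp
        ring
    · rintro ⟨w, hw, rfl⟩
      obtain ⟨hwm, hw1⟩ := (hT w).mp hw
      show (ψ w + I) ^ m = (ψ w - I) ^ m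
      rw [hψ_add w hw1, hψ_sub w hw1, div_pow, div_pow, mul_pow, hwm, mul_one]
  have hinj : InjOn ψ T := fun w hw w' hw' h ↦ by
    have h₁ := ((hT w).mp hw).2
    have h₁' := ((hT w').mp hw').2
    have := congrArg (· - I) h
    simp only [hψ_sub w h₁, hψ_sub w' h₁'] at this
    rw [div_eq_div_iff (sub_ne_zero.mpr h₁) (sub_ne_zero.mpr h₁')] at this
    simpa [sub_eq_zero, I_ne_zero, eq_comm] using this
  rw [himage, hinj.ncard_image, Set.ncard_coe_finset, Finset.card_sdiff_of_subset
    (by simpa using Polynomial.one_mem_nthRootsFinset (Nat.pos_of_ne_zero hm)),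
    (isPrimitiveRoot_exp m hm).card_nthRootsFinset, Finset.card_singleton]

theorem exp_two_mul_I_mul_eq_exp_iff {a : ℝ} (ha : a ≠ 0) (θ φ : ℝ) :
    exp (2 * I * a * θ) = exp (2 * I * a * φ) ↔ ∃ j : ℤ, θ = φ + j * (Real.pi / a) := by
  rw [exp_eq_exp_iff_exists_int]
  refine exists_congr fun j ↦ ?_
  have e₁ : 2 * I * a * θ = ((2 * a * θ : ℝ) : ℂ) * I := by push_cast; ring
  have e₂ : 2 * I * a * φ + j * (2 * Real.pi * I) =
      ((2 * a * φ + j * (2 * Real.pi) : ℝ) : ℂ) * I := by push_cast; ring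
  rw [e₁, e₂, mul_left_inj' I_ne_zero, ofReal_inj]
  field_simp

theorem exp_two_mul_I_mul_eq_one_iff {a : ℝ} (ha : a ≠ 0) (θ : ℝ) :
    exp (2 * I * a * θ) = 1 ↔ ∃ j : ℤ, θ = j * (Real.pi / a) := by
  simpa using exp_two_mul_I_mul_eq_exp_iff ha θ 0

theorem exp_two_mul_I_mul_eq_neg_one_iff {a : ℝ} (ha : a ≠ 0) (θ : ℝ) :
    exp (2 * I * a * θ) = -1 ↔ ∃ j : ℤ, θ = Real.pi / (2 * a) + j * (Real.pi / a) := by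
  have hπ : exp (2 * I * a * (Real.pi / (2 * a) : ℝ)) = -1 := by
    have ha' : (a : ℂ) ≠ 0 := ofReal_ne_zero.mpr ha
    rw [← exp_pi_mul_I]
    congr 1
    push_cast
    field_simp
  rw [← hπ, exp_two_mul_I_mul_eq_exp_iff ha]

/-- **The first concrete example (Section 1.3).** For `f(z) = 2i/(z² + 1)`:
the iterated derivatives are
`f⁽ⁿ⁾(z) = (−1)ⁿ·n!·((z − i)^{−(n+1)} − (z + i)^{−(n+1)})`; the zero set of `f⁽ⁿ⁾`
in `ℂ ∖ {i, −i}` is `{tan θ : θ ∈ (−π/2, π/2), exp(2i(n+1)θ) = (−1)^{n+1}}`; it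
consists of exactly `n` distinct (real) numbers; and the condition
`exp(2i(n+1)θ) = (−1)^{n+1}` holds exactly when `θ` is a multiple of `π/(n+1)`
for odd `n`, and exactly when `θ ∈ π/(2n+2) + ℤ·π/(n+1)` for even `n`. -/
theorem first_concrete_example
    (f : ℂ → ℂ) (hf : ∀ z : ℂ, f z = 2 * Complex.I / (z ^ 2 + 1)) :
    ∀ n : ℕ,
      (∀ z : ℂ, z ≠ Complex.I → z ≠ -Complex.I →
        iteratedDeriv n f z = (-1) ^ n * (n.factorial : ℂ) *
          ((z - Complex.I) ^ (-(n + 1 : ℤ)) - (z + Complex.I) ^ (-(n + 1 : ℤ))))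
      ∧ {z : ℂ | (z ≠ Complex.I ∧ z ≠ -Complex.I) ∧ iteratedDeriv n f z = 0}
          = {z : ℂ | ∃ θ : ℝ, -(Real.pi / 2) < θ ∧ θ < Real.pi / 2 ∧
              Complex.exp (2 * Complex.I * ((n : ℂ) + 1) * (θ : ℂ)) = (-1) ^ (n + 1) ∧
              z = (Real.tan θ : ℂ)}
      ∧ {z : ℂ | (z ≠ Complex.I ∧ z ≠ -Complex.I) ∧ iteratedDeriv n f z = 0}.ncard = n
      ∧ (Odd n → ∀ θ : ℝ,
          (Complex.exp (2 * Complex.I * ((n : ℂ) + 1) * (θ : ℂ)) = (-1) ^ (n + 1)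
            ↔ ∃ j : ℤ, θ = j * (Real.pi / (n + 1))))
      ∧ (Even n → ∀ θ : ℝ,
          (Complex.exp (2 * Complex.I * ((n : ℂ) + 1) * (θ : ℂ)) = (-1) ^ (n + 1)
            ↔ ∃ j : ℤ, θ = Real.pi / (2 * n + 2) + j * (Real.pi / (n + 1)))) := by
  obtain rfl : f = fun w ↦ 2 * I / (w ^ 2 + 1) := funext hf
  intro n
  have hzeros := setOf_iteratedDeriv_two_mul_I_div_sq_add_one_eq_zero n
  have ha : ((n : ℝ) + 1) ≠ 0 := n.cast_add_one_ne_zero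
  have hcast : (n : ℂ) + 1 = (((n : ℝ) + 1 : ℝ) : ℂ) := by push_cast; rfl
  refine ⟨iteratedDeriv_two_mul_I_div_sq_add_one n, ?_, ?_, fun hn θ ↦ ?_, fun hn θ ↦ ?_⟩
  · rw [hzeros, setOf_add_I_pow_eq_sub_I_pow n.add_one_ne_zero]
    push_cast
    rfl
  · rw [hzeros, ncard_setOf_add_I_pow_eq_sub_I_pow n.add_one_ne_zero, Nat.add_sub_cancel]
  · rw [hn.add_one.neg_one_pow, hcast]
    exact exp_two_mul_I_mul_eq_one_iff ha θ
  · rw [hn.add_one.neg_one_pow, hcast, exp_two_mul_I_mul_eq_neg_one_iff ha, mul_add, mul_one]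
end
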